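/- arXiv:1602.03302 — 8 statements merged into one kernel-verified Lean document; each statement's English description precedes it below -/
import Mathlib

section
/- For n ≥ 2, the distinguishing number of the friendship graph F_n equals ⌈(1 + √(8n+1))/2⌉. -/
/-!
For `n ≥ 2` the centre of `F_n` is its only vertex adjacent to all others, so every
automorphism fixes it and therefore permutes the `n` outer edges; conversely, any permutation
of the triangles combined with flips inside them is an automorphism. Hence a labelling is
distinguishing exactly when the two outer vertices of each triangle get different labels and
different triangles get different unordered pairs of labels. With `d` labels this is possible
iff `n ≤ C(d, 2)`, and solving `n ≤ d (d - 1) / 2` for `d` gives `⌈(1 + √(8n + 1)) / 2⌉`.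
-/

open SimpleGraph

/-- A vertex labeling with `d` labels is distinguishing if the only automorphism
preserving it is the identity. -/
def IsDistinguishing {V : Type*} (G : SimpleGraph V) {d : ℕ} (c : V → Fin d) : Prop :=
  ∀ φ : G ≃g G, (∀ v, c (φ v) = c v) → ∀ v, φ v = v

/-- The distinguishing number of a graph. -/
noncomputable def distinguishingNumber {V : Type*} (G : SimpleGraph V) : ℕ :=
  sInf {d : ℕ | ∃ c : V → Fin d, IsDistinguishing G c}

/-- An edge labeling with `d` labels is distinguishing if the only automorphism
preserving it is the identity. -/
def IsDistinguishingEdge {V : Type*} (G : SimpleGraph V) {d : ℕ} (c : G.edgeSet → Fin d) : Prop :=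
  ∀ φ : G ≃g G, (∀ e, c (φ.mapEdgeSet e) = c e) → ∀ v, φ v = v

/-- The distinguishing index of a graph. -/
noncomputable def distinguishingIndex {V : Type*} (G : SimpleGraph V) : ℕ :=
  sInf {d : ℕ | ∃ c : G.edgeSet → Fin d, IsDistinguishingEdge G c}

/-- The friendship graph `F n`: `n` triangles glued at a common central vertex `none`. -/
def friendshipGraph (n : ℕ) : SimpleGraph (Option (Fin n × Fin 2)) :=
  SimpleGraph.fromRel (fun u v =>
    u = none ∨ ∃ i a b, u = some (i, a) ∧ v = some (i, b))

/-- The book graph `B n = K_{1,n} □ P₂`. -/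
def bookGraph (n : ℕ) : SimpleGraph ((Fin 1 ⊕ Fin n) × Fin 2) :=
  (completeBipartiteGraph (Fin 1) (Fin n)) □ (SimpleGraph.pathGraph 2)

/-- The corona product `G ∘ H`: one copy of `G`, a copy of `H` for each vertex `v` of `G`,
with `v` joined to every vertex of its copy of `H`. -/
def coronaProduct {V W : Type*} (G : SimpleGraph V) (H : SimpleGraph W) :
    SimpleGraph (V ⊕ V × W) :=
  SimpleGraph.fromRel (fun a b =>
    (∃ u v, a = Sum.inl u ∧ b = Sum.inl v ∧ G.Adj u v) ∨
    (∃ v w w', a = Sum.inr (v, w) ∧ b = Sum.inr (v, w') ∧ H.Adj w w') ∨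
    (∃ v w, a = Sum.inl v ∧ b = Sum.inr (v, w)))

open Equiv

theorem SimpleGraph.Iso.adj_apply_of_forall_adj {V W : Type*} {G : SimpleGraph V}
    {G' : SimpleGraph W} (φ : G ≃g G') {v : V} (hv : ∀ w, w ≠ v → G.Adj v w) :
    ∀ w, w ≠ φ v → G'.Adj (φ v) w := by
  intro w hw
  rw [← φ.apply_symm_apply w, φ.map_adj_iff]
  exact hv _ fun h => hw (by rw [← h, φ.apply_symm_apply])

theorem Sym2.exists_perm_of_mk_eq_mk {α : Type*} {x y : Fin 2 → α}
    (h : s(x 0, x 1) = s(y 0, y 1)) : ∃ τ : Perm (Fin 2), ∀ a, y (τ a) = x a := by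
  rcases Sym2.eq_iff.1 h with ⟨h0, h1⟩ | ⟨h0, h1⟩
  · exact ⟨1, fun a => by fin_cases a <;> simp [h0, h1]⟩
  · exact ⟨swap 0 1, fun a => by fin_cases a <;> simp [h0, h1]⟩

namespace friendshipGraph

variable {n : ℕ}

@[simp] theorem adj_none_left {v : Option (Fin n × Fin 2)} :
    (friendshipGraph n).Adj none v ↔ v ≠ none := by
  cases v <;> simp [friendshipGraph]

@[simp] theorem adj_none_right {v : Option (Fin n × Fin 2)} :
    (friendshipGraph n).Adj v none ↔ v ≠ none := by
  rw [adj_comm, adj_none_left]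

@[simp] theorem adj_some_some {i j : Fin n} {a b : Fin 2} :
    (friendshipGraph n).Adj (some (i, a)) (some (j, b)) ↔ i = j ∧ a ≠ b := by
  simp only [friendshipGraph, fromRel_adj]
  aesop

def triangleIso (σ : Perm (Fin n)) (τ : Fin n → Perm (Fin 2)) :
    friendshipGraph n ≃g friendshipGraph n where
  toEquiv := (prodShear σ τ).optionCongr
  map_rel_iff' := by
    rintro (_ | ⟨i, a⟩) (_ | ⟨j, b⟩) <;> simp
    rintro rfl
    exact (τ i).injective.ne_iff

@[simp] theorem triangleIso_apply_some (σ : Perm (Fin n)) (τ : Fin n → Perm (Fin 2))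
    (i : Fin n) (a : Fin 2) : triangleIso σ τ (some (i, a)) = some (σ i, τ i a) := rfl

theorem Iso.apply_none (hn : 2 ≤ n) (φ : friendshipGraph n ≃g friendshipGraph n) :
    φ none = none := by
  have hφ := φ.adj_apply_of_forall_adj (v := none) fun w hw => adj_none_left.2 hw
  by_contra h
  obtain ⟨⟨j, b⟩, hj⟩ := Option.ne_none_iff_exists'.1 h
  obtain ⟨k, hk⟩ := Fintype.exists_ne_of_one_lt_card (by rw [Fintype.card_fin]; omega) j
  have := hφ (some (k, 0)) (by simp [hj, hk])
  simp only [hj, adj_some_some] at this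
  exact hk this.1.symm

theorem Iso.exists_mk_apply_eq (hn : 2 ≤ n) (φ : friendshipGraph n ≃g friendshipGraph n)
    (i : Fin n) : ∃ j, s(φ (some (i, 0)), φ (some (i, 1))) = s(some (j, 0), some (j, 1)) := by
  have hsome : ∀ a, φ (some (i, a)) ≠ none := fun a h => by
    simpa using φ.injective (h.trans (Iso.apply_none hn φ).symm)
  obtain ⟨⟨j, a⟩, ha⟩ := Option.ne_none_iff_exists'.1 (hsome 0)
  obtain ⟨⟨j', b⟩, hb⟩ := Option.ne_none_iff_exists'.1 (hsome 1)
  have hadj := φ.map_adj_iff.2 (adj_some_some.2 ⟨rfl, zero_ne_one⟩ :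
    (friendshipGraph n).Adj (some (i, 0)) (some (i, 1)))
  rw [ha, hb, adj_some_some] at hadj
  obtain ⟨rfl, hab⟩ := hadj
  refine ⟨j, ?_⟩
  rw [ha, hb]
  fin_cases a <;> fin_cases b <;> simp_all [Sym2.eq_swap]

variable {d : ℕ} {c : Option (Fin n × Fin 2) → Fin d}

theorem eq_and_eq_one_of_isDistinguishing (hc : IsDistinguishing (friendshipGraph n) c)
    {i j : Fin n} {τ : Perm (Fin 2)} (h : ∀ a, c (some (j, τ a)) = c (some (i, a))) :
    j = i ∧ τ = 1 := by
  let φ := triangleIso (swap i j) fun k => if k = i then τ else if k = j then τ⁻¹ else 1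
  have hφ : ∀ v, c (φ v) = c v := by
    rintro (_ | ⟨k, a⟩)
    · rfl
    by_cases hki : k = i
    · subst hki
      simp [φ, h]
    by_cases hkj : k = j
    · subst hkj
      simp [φ, hki, ← h]
    · simp [φ, hki, hkj, swap_apply_of_ne_of_ne hki hkj]
  have hfix : ∀ a, j = i ∧ τ a = a := fun a => by
    simpa [φ] using hc φ hφ (some (i, a))
  exact ⟨(hfix 0).1, Equiv.ext fun a => (hfix a).2⟩

theorem isDistinguishing_iff (hn : 2 ≤ n) :
    IsDistinguishing (friendshipGraph n) c ↔
      (∀ i, c (some (i, 0)) ≠ c (some (i, 1))) ∧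
        Function.Injective fun i => s(c (some (i, 0)), c (some (i, 1))) := by
  constructor
  · intro hc
    refine ⟨fun i h => ?_, fun i j h => ?_⟩
    · have hswap : ∀ a, c (some (i, swap 0 1 a)) = c (some (i, a)) := fun a => by
        fin_cases a <;> simp [h]
      exact absurd (eq_and_eq_one_of_isDistinguishing hc hswap).2 (by decide)
    · obtain ⟨τ, hτ⟩ := Sym2.exists_perm_of_mk_eq_mk (x := fun a => c (some (i, a)))
        (y := fun a => c (some (j, a))) h
      exact (eq_and_eq_one_of_isDistinguishing hc hτ).1.symm
  · rintro ⟨hne, hinj⟩ φ hφ (_ | ⟨i, a⟩)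
    · exact Iso.apply_none hn φ
    obtain ⟨j, hj⟩ := Iso.exists_mk_apply_eq hn φ i
    obtain rfl : j = i := hinj (by simpa [hφ] using congrArg (Sym2.map c) hj.symm)
    rcases Sym2.eq_iff.1 hj with ⟨h0, h1⟩ | ⟨h0, -⟩
    · fin_cases a
      exacts [h0, h1]
    · exact absurd (by rw [← hφ, h0]) (hne j)

theorem exists_isDistinguishing_iff (hn : 2 ≤ n) :
    (∃ c : Option (Fin n × Fin 2) → Fin d, IsDistinguishing (friendshipGraph n) c) ↔
      n ≤ d.choose 2 := by
  have hcard : Fintype.card {p : Sym2 (Fin d) // ¬p.IsDiag} = d.choose 2 := by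
    rw [Sym2.card_subtype_not_diag, Fintype.card_fin]
  simp_rw [isDistinguishing_iff hn]
  constructor
  · rintro ⟨c, hne, hinj⟩
    have := Fintype.card_le_of_injective
      (fun i => (⟨s(c (some (i, 0)), c (some (i, 1))), by simpa using hne i⟩ :
        {p : Sym2 (Fin d) // ¬p.IsDiag}))
      fun i j h => hinj (congrArg Subtype.val h)
    simpa [hcard] using this
  · intro h
    obtain ⟨e⟩ := Function.Embedding.nonempty_of_card_le
      (α := Fin n) (β := {p : Sym2 (Fin d) // ¬p.IsDiag}) (by rwa [hcard, Fintype.card_fin])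
    let x : Fin n → Fin d × Fin d := fun i => (e i).1.out
    have hx : ∀ i, s((x i).1, (x i).2) = (e i).1 := fun i => Quot.out_eq _
    refine ⟨fun v => v.elim (x ⟨0, by omega⟩).1 fun p => ![(x p.1).1, (x p.1).2] p.2,
      fun i h => (e i).2 ?_, fun i j h => e.injective (Subtype.ext ?_)⟩
    · simpa [← hx i] using h
    · simpa [hx] using h

end friendshipGraph

theorem ceil_le_iff_le_choose_two {n d : ℕ} (hn : 0 < n) :
    ⌈(1 + √(8 * n + 1)) / 2⌉₊ ≤ d ↔ n ≤ d.choose 2 := by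
  rw [Nat.choose_two_right, Nat.ceil_le]
  rcases d with _ | e
  · simp only [CharP.cast_eq_zero, zero_mul, Nat.zero_div, nonpos_iff_eq_zero]
    exact ⟨fun h => by nlinarith [Real.sqrt_nonneg (8 * n + 1 : ℝ)], by omega⟩
  · rw [div_le_iff₀ two_pos, ← le_sub_iff_add_le', Real.sqrt_le_left (by push_cast; linarith),
      Nat.le_div_iff_mul_le two_pos, Nat.add_sub_cancel]
    have hsq : ((e + 1 : ℕ) * 2 - 1 : ℝ) ^ 2 = ((4 * ((e + 1) * e) + 1 : ℕ) : ℝ) := by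
      push_cast; ring
    rw [hsq, show (8 * n + 1 : ℝ) = ((8 * n + 1 : ℕ) : ℝ) by push_cast; ring, Nat.cast_le]
    omega

theorem friendship_distinguishingNumber (n : ℕ) (hn : 2 ≤ n) :
    distinguishingNumber (friendshipGraph n) = ⌈(1 + Real.sqrt (8 * n + 1)) / 2⌉₊ := by
  have h : {d | ∃ c : Option (Fin n × Fin 2) → Fin d, IsDistinguishing (friendshipGraph n) c} =
      Set.Ici ⌈(1 + Real.sqrt (8 * n + 1)) / 2⌉₊ := by
    ext d
    rw [Set.mem_ofPred_eq, friendshipGraph.exists_isDistinguishing_iff hn, Set.mem_Ici,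
      ceil_le_iff_le_choose_two (by omega)]
  rw [distinguishingNumber, h, csInf_Ici]
end

section
/- For n ≥ 2, the distinguishing index of the friendship graph F_n equals min{k : k³ − k² ≥ 2n}, i.e., the least k with k·C(k,2) ≥ n. -/
open SimpleGraph

namespace FG
variable {n : ℕ}

@[simp] lemma adj_none_some (x : Fin n × Fin 2) : (friendshipGraph n).Adj none (some x) := by
  simp [friendshipGraph, SimpleGraph.fromRel_adj]

@[simp] lemma adj_some_none (x : Fin n × Fin 2) : (friendshipGraph n).Adj (some x) none :=
  (adj_none_some x).symm

@[simp] lemma adj_some_some (i j : Fin n) (a b : Fin 2) :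
    (friendshipGraph n).Adj (some (i,a)) (some (j,b)) ↔ i = j ∧ a ≠ b := by
  simp only [friendshipGraph, SimpleGraph.fromRel_adj, ne_eq, Option.some.injEq,
    Prod.mk.injEq, reduceCtorEq, false_or]
  constructor
  · rintro ⟨h1, ⟨k,x,y,⟨hi,ha⟩,⟨hj,hb⟩⟩|⟨k,x,y,⟨hj,hb⟩,⟨hi,ha⟩⟩⟩ <;>
      subst hi hj <;> exact ⟨rfl, fun hab => h1 ⟨rfl, hab⟩⟩
  · rintro ⟨rfl, hab⟩
    exact ⟨fun h => hab h.2, Or.inl ⟨i, a, b, ⟨rfl, rfl⟩, ⟨rfl, rfl⟩⟩⟩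

lemma adj_cases {u v : Option (Fin n × Fin 2)} (h : (friendshipGraph n).Adj u v) :
    (u = none ∧ ∃ x, v = some x) ∨ (v = none ∧ ∃ x, u = some x) ∨
    (∃ i a b, a ≠ b ∧ u = some (i,a) ∧ v = some (i,b)) := by
  match u, v with
  | none, none => exact absurd h (SimpleGraph.irrefl _)
  | none, some x => exact Or.inl ⟨rfl, x, rfl⟩
  | some x, none => exact Or.inr (Or.inl ⟨rfl, x, rfl⟩)
  | some (i,a), some (j,b) =>
    obtain ⟨rfl, hab⟩ := (adj_some_some i j a b).mp h
    exact Or.inr (Or.inr ⟨i, a, b, hab, rfl, rfl⟩)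

def isoOfInvolutive (f : Option (Fin n × Fin 2) → Option (Fin n × Fin 2))
    (hinv : Function.Involutive f)
    (hadj : ∀ u v, (friendshipGraph n).Adj u v → (friendshipGraph n).Adj (f u) (f v)) :
    friendshipGraph n ≃g friendshipGraph n where
  toEquiv := hinv.toPerm f
  map_rel_iff' := by
    intro u v
    constructor
    · intro h
      have := hadj _ _ h
      simpa [hinv u, hinv v] using this
    · exact hadj u v

@[simp] lemma isoOfInvolutive_apply (f) (hinv) (hadj) (u : Option (Fin n × Fin 2)) :
    (isoOfInvolutive (n := n) f hinv hadj) u = f u := rfl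

def spoke (i : Fin n) (a : Fin 2) : (friendshipGraph n).edgeSet :=
  ⟨s(none, some (i,a)), adj_none_some (i,a)⟩

def outer (i : Fin n) : (friendshipGraph n).edgeSet :=
  ⟨s(some (i,0), some (i,1)), by simp⟩

lemma mapEdgeSet_val (φ : friendshipGraph n ≃g friendshipGraph n)
    (e : (friendshipGraph n).edgeSet) :
    (φ.mapEdgeSet e : Sym2 (Option (Fin n × Fin 2))) = Sym2.map φ e.val := rfl

lemma edge_cases (e : (friendshipGraph n).edgeSet) :
    (∃ i a, e = spoke i a) ∨ (∃ i, e = outer i) := by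
  obtain ⟨e, he⟩ := e
  induction e using Sym2.ind with
  | _ u v =>
    rw [SimpleGraph.mem_edgeSet] at he
    rcases adj_cases he with ⟨rfl, ⟨i,a⟩, rfl⟩ | ⟨rfl, ⟨i,a⟩, rfl⟩ | ⟨i, a, b, hab, rfl, rfl⟩
    · exact Or.inl ⟨i, a, rfl⟩
    · exact Or.inl ⟨i, a, Subtype.ext (Sym2.eq_swap)⟩
    · fin_cases a <;> fin_cases b <;> simp_all
      · exact Or.inr ⟨i, rfl⟩
      · exact Or.inr ⟨i, Subtype.ext (Sym2.eq_swap)⟩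

lemma mapEdgeSet_spoke (φ : friendshipGraph n ≃g friendshipGraph n)
    (h0 : φ none = none) {i : Fin n} {a : Fin 2} {p : Fin n × Fin 2}
    (hp : φ (some (i,a)) = some p) : φ.mapEdgeSet (spoke i a) = spoke p.1 p.2 := by
  apply Subtype.ext
  rw [mapEdgeSet_val]
  simp [spoke, Sym2.map_pair_eq, h0, hp]

lemma mapEdgeSet_outer (φ : friendshipGraph n ≃g friendshipGraph n)
    {i m : Fin n} {a b : Fin 2} (hab : a ≠ b)
    (hp : φ (some (i,0)) = some (m,a)) (hq : φ (some (i,1)) = some (m,b)) :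
    φ.mapEdgeSet (outer i) = outer m := by
  apply Subtype.ext
  rw [mapEdgeSet_val]
  simp only [outer, Sym2.map_pair_eq, hp, hq]
  fin_cases a <;> fin_cases b <;> simp_all [Sym2.eq_swap]

variable {n : ℕ}

def swapTriFun (i0 : Fin n) : Option (Fin n × Fin 2) → Option (Fin n × Fin 2)
  | none => none
  | some (j, a) => if j = i0 then some (j, a + 1) else some (j, a)

lemma swapTriFun_inv (i0 : Fin n) : Function.Involutive (swapTriFun i0) := by
  rintro (_ | ⟨j, a⟩)
  · rfl
  · by_cases h : j = i0 <;> simp [swapTriFun, h] <;> omega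

lemma swapTriFun_adj (i0 : Fin n) (u v : Option (Fin n × Fin 2))
    (h : (friendshipGraph n).Adj u v) :
    (friendshipGraph n).Adj (swapTriFun i0 u) (swapTriFun i0 v) := by
  rcases adj_cases h with ⟨rfl, ⟨i,a⟩, rfl⟩ | ⟨rfl, ⟨i,a⟩, rfl⟩ | ⟨i, a, b, hab, rfl, rfl⟩ <;>
    simp only [swapTriFun] <;> split_ifs <;> simp_all <;> omega

def swapTri (i0 : Fin n) : friendshipGraph n ≃g friendshipGraph n :=
  isoOfInvolutive (swapTriFun i0) (swapTriFun_inv i0) (swapTriFun_adj i0)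

def swapPairFun (i j : Fin n) (t : Fin 2) : Option (Fin n × Fin 2) → Option (Fin n × Fin 2)
  | none => none
  | some (l, a) => if l = i then some (j, a + t) else if l = j then some (i, a + t) else some (l, a)

lemma swapPairFun_inv (i j : Fin n) (t : Fin 2) (hij : i ≠ j) :
    Function.Involutive (swapPairFun i j t) := by
  rintro (_ | ⟨l, a⟩)
  · rfl
  · by_cases h1 : l = i <;> by_cases h2 : l = j <;>
      simp_all [swapPairFun, hij, Ne.symm hij] <;> omega

lemma swapPairFun_adj (i j : Fin n) (t : Fin 2) (u v : Option (Fin n × Fin 2))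
    (h : (friendshipGraph n).Adj u v) :
    (friendshipGraph n).Adj (swapPairFun i j t u) (swapPairFun i j t v) := by
  rcases adj_cases h with ⟨rfl, ⟨l,a⟩, rfl⟩ | ⟨rfl, ⟨l,a⟩, rfl⟩ | ⟨l, a, b, hab, rfl, rfl⟩ <;>
    simp only [swapPairFun] <;> split_ifs <;> simp_all <;> omega

def swapPair (i j : Fin n) (t : Fin 2) (hij : i ≠ j) : friendshipGraph n ≃g friendshipGraph n :=
  isoOfInvolutive (swapPairFun i j t) (swapPairFun_inv i j t hij) (swapPairFun_adj i j t)

variable {n : ℕ}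

lemma s00 : (0:Fin 2) + 0 = 0 := rfl
lemma s01 : (0:Fin 2) + 1 = 1 := rfl
lemma s10 : (1:Fin 2) + 0 = 1 := rfl
lemma s11 : (1:Fin 2) + 1 = 0 := rfl
lemma fin2_add_add : ∀ x y : Fin 2, x + y + y = x := by decide
lemma fin2_ne_shift : ∀ y : Fin 2, (0:Fin 2) + y ≠ 1 + y := by decide
lemma fin2_eq_add_one : ∀ x y : Fin 2, x ≠ y → y = x + 1 := by decide
lemma fin2_cases : ∀ x : Fin 2, x = 0 ∨ x = 1 := by decide

def diagEquiv (d : ℕ) : {p : Fin d × Fin d × Fin d // p.1 = p.2.1} ≃ Fin d × Fin d where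
  toFun q := (q.1.1, q.1.2.2)
  invFun x := ⟨(x.1, x.1, x.2), rfl⟩
  left_inv := by rintro ⟨⟨a, b, c⟩, h⟩; simp only at h; subst h; rfl
  right_inv := by rintro ⟨a, c⟩; rfl

lemma card_ne_triples (d : ℕ) :
    Fintype.card {p : Fin d × Fin d × Fin d // p.1 ≠ p.2.1} = d ^ 3 - d ^ 2 := by
  have h1 : Fintype.card {p : Fin d × Fin d × Fin d // p.1 = p.2.1} = d ^ 2 := by
    rw [Fintype.card_congr (diagEquiv d)]; simp [sq]
  rw [Fintype.card_subtype_compl, h1]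
  congr 1
  simp only [Fintype.card_prod, Fintype.card_fin]
  ring

lemma lower_bound (hn : 2 ≤ n) {d : ℕ} (c : (friendshipGraph n).edgeSet → Fin d)
    (hc : IsDistinguishingEdge (friendshipGraph n) c) : 2 * n ≤ d ^ 3 - d ^ 2 := by
  have hspoke : ∀ i : Fin n, c (spoke i 0) ≠ c (spoke i 1) := by
    intro i h
    have key : ∀ e, c ((swapTri i).mapEdgeSet e) = c e := by
      intro e
      rcases edge_cases e with ⟨l, a, rfl⟩ | ⟨l, rfl⟩
      · have hp : (swapTri i) (some (l, a)) = some (if l = i then (l, a+1) else (l, a)) := by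
          simp only [swapTri, isoOfInvolutive_apply, swapTriFun]
          split_ifs <;> rfl
        rw [mapEdgeSet_spoke (swapTri i) rfl hp]
        split_ifs with hl
        · subst hl
          show c (spoke l (a + 1)) = c (spoke l a)
          rcases fin2_cases a with rfl | rfl
          · rw [s01]; exact h.symm
          · rw [s11]; exact h
        · rfl
      · by_cases hl : l = i
        · subst hl
          rw [mapEdgeSet_outer (swapTri l) (i := l) (m := l) (a := 1) (b := 0) (by decide)
            (by simp [swapTri, swapTriFun, s01]) (by simp [swapTri, swapTriFun, s11])]
        · rw [mapEdgeSet_outer (swapTri i) (i := l) (m := l) (a := 0) (b := 1) (by decide)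
            (by simp [swapTri, swapTriFun, hl]) (by simp [swapTri, swapTriFun, hl])]
    have h10 : (swapTri i) (some (i,0)) = some (i,1) := by
      simp [swapTri, swapTriFun, s01]
    have := hc (swapTri i) key (some (i, 0))
    rw [h10] at this
    simp at this
  set F : Fin n × Fin 2 → {p : Fin d × Fin d × Fin d // p.1 ≠ p.2.1} :=
    fun x => ⟨(c (spoke x.1 x.2), c (spoke x.1 (x.2 + 1)), c (outer x.1)), by
      obtain ⟨i, a⟩ := x
      rcases fin2_cases a with rfl | rfl
      · rw [s01]; exact hspoke i
      · rw [s11]; exact (hspoke i).symm⟩ with hF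
  have hFinj : Function.Injective F := by
    rintro ⟨i, ε⟩ ⟨j, δ⟩ heq
    simp only [hF, Subtype.mk.injEq, Prod.mk.injEq] at heq
    obtain ⟨h1, h2, h3⟩ := heq
    by_cases hij : i = j
    · subst hij
      suffices hεδ : ε = δ by rw [hεδ]
      by_contra hed
      obtain rfl := fin2_eq_add_one ε δ hed
      rcases fin2_cases ε with rfl | rfl
      · rw [s01] at h1; exact hspoke i h1
      · rw [s11] at h1; exact hspoke i h1.symm
    · exfalso
      have hsp1 : ∀ a : Fin 2, c (spoke i a) = c (spoke j (a + (ε + δ))) := by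
        intro a
        rcases fin2_cases a with rfl | rfl <;> rcases fin2_cases ε with rfl | rfl <;>
          rcases fin2_cases δ with rfl | rfl <;>
          simp_all [s00, s01, s10, s11]
      have hsp2 : ∀ b : Fin 2, c (spoke j b) = c (spoke i (b + (ε + δ))) := by
        intro b
        have := hsp1 (b + (ε + δ))
        rw [fin2_add_add] at this
        exact this.symm
      have key : ∀ e, c ((swapPair i j (ε + δ) hij).mapEdgeSet e) = c e := by
        intro e
        have happ : ∀ l a, (swapPair i j (ε + δ) hij) (some (l, a)) =
            some (if l = i then (j, a + (ε + δ)) else if l = j then (i, a + (ε + δ))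
              else (l, a)) := by
          intro l a
          simp only [swapPair, isoOfInvolutive_apply, swapPairFun]
          split_ifs <;> rfl
        rcases edge_cases e with ⟨l, a, rfl⟩ | ⟨l, rfl⟩
        · rw [mapEdgeSet_spoke _ rfl (happ l a)]
          split_ifs with h1' h2'
          · subst h1'; exact (hsp1 a).symm
          · subst h2'; exact (hsp2 a).symm
          · rfl
        · by_cases h1' : l = i
          · subst h1'
            rw [mapEdgeSet_outer _ (i := l) (m := j) (a := 0 + (ε + δ)) (b := 1 + (ε + δ))
              (fin2_ne_shift _) (by rw [happ]; simp) (by rw [happ]; simp)]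
            exact h3.symm
          · by_cases h2' : l = j
            · subst h2'
              rw [mapEdgeSet_outer _ (i := l) (m := i) (a := 0 + (ε + δ)) (b := 1 + (ε + δ))
                (fin2_ne_shift _) (by rw [happ]; simp [h1']) (by rw [happ]; simp [h1'])]
              exact h3
            · rw [mapEdgeSet_outer _ (i := l) (m := l) (a := 0) (b := 1)
                (by decide) (by rw [happ]; simp [h1', h2']) (by rw [happ]; simp [h1', h2'])]
      have := hc (swapPair i j (ε + δ) hij) key (some (i, 0))
      have happly : (swapPair i j (ε + δ) hij) (some (i,0)) = some (j, 0 + (ε + δ)) := by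
        simp [swapPair, isoOfInvolutive_apply, swapPairFun]
      rw [happly] at this
      exact hij ((Prod.ext_iff.mp (Option.some.inj this)).1).symm
  have hcard := Fintype.card_le_of_injective F hFinj
  rw [card_ne_triples] at hcard
  simpa [Fintype.card_prod, mul_comm] using hcard

variable {n k : ℕ}

def splitEquiv (d : ℕ) : {p : Fin d × Fin d × Fin d // p.1 ≠ p.2.1} ≃
    {p : Fin d × Fin d × Fin d // p.1 < p.2.1} × Fin 2 where
  toFun q := if h : q.1.1 < q.1.2.1 then (⟨q.1, h⟩, 0)
    else (⟨(q.1.2.1, q.1.1, q.1.2.2), lt_of_le_of_ne (not_lt.mp h) (Ne.symm q.2)⟩, 1)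
  invFun x := if x.2 = 0 then ⟨x.1.1, ne_of_lt x.1.2⟩
    else ⟨(x.1.1.2.1, x.1.1.1, x.1.1.2.2), (ne_of_lt x.1.2).symm⟩
  left_inv := by
    rintro ⟨⟨a, b, c⟩, h⟩
    by_cases hab : a < b <;> simp [hab]
  right_inv := by
    rintro ⟨⟨⟨a, b, c⟩, h⟩, s⟩
    rcases fin2_cases s with rfl | rfl
    · simp [h]
    · simp [not_lt.mpr (le_of_lt h), asymm h]

lemma card_lt_triples (d : ℕ) :
    2 * Fintype.card {p : Fin d × Fin d × Fin d // p.1 < p.2.1} = d ^ 3 - d ^ 2 := by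
  rw [← card_ne_triples d, Fintype.card_congr (splitEquiv d)]
  simp [mul_comm]

def colf (hk0 : 0 < k) (ι : Fin n → Fin k × Fin k × Fin k) :
    Option (Fin n × Fin 2) → Option (Fin n × Fin 2) → Fin k
  | none, none => ⟨0, hk0⟩
  | none, some (i, a) => if a = 0 then (ι i).1 else (ι i).2.1
  | some (i, a), none => if a = 0 then (ι i).1 else (ι i).2.1
  | some (i, _), some (j, _) => (ι (min i j)).2.2

lemma colf_symm (hk0 : 0 < k) (ι : Fin n → Fin k × Fin k × Fin k) :
    ∀ u v, colf hk0 ι u v = colf hk0 ι v u := by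
  rintro (_|⟨i,a⟩) (_|⟨j,b⟩) <;> simp [colf, min_comm]

def col (hk0 : 0 < k) (ι : Fin n → Fin k × Fin k × Fin k) :
    (friendshipGraph n).edgeSet → Fin k :=
  fun e => Sym2.lift ⟨fun u v => colf hk0 ι u v, colf_symm hk0 ι⟩ e.1

@[simp] lemma col_spoke (hk0 : 0 < k) (ι : Fin n → Fin k × Fin k × Fin k)
    (i : Fin n) (a : Fin 2) :
    col hk0 ι (spoke i a) = if a = 0 then (ι i).1 else (ι i).2.1 := by
  simp [col, spoke, colf]

@[simp] lemma col_outer (hk0 : 0 < k) (ι : Fin n → Fin k × Fin k × Fin k) (i : Fin n) :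
    col hk0 ι (outer i) = (ι i).2.2 := by
  simp [col, outer, colf]

lemma col_distinguishing (hn : 2 ≤ n) (hk0 : 0 < k) (ι : Fin n → Fin k × Fin k × Fin k)
    (hlt : ∀ i, (ι i).1 < (ι i).2.1) (hinj : Function.Injective ι) :
    IsDistinguishingEdge (friendshipGraph n) (col hk0 ι) := by
  intro φ hcol
  have hnone : φ none = none := by
    cases hφ : φ none with
    | none => rfl
    | some x =>
      obtain ⟨i, a⟩ := x
      obtain ⟨j, hj⟩ : ∃ j : Fin n, j ≠ i :=
        Fintype.exists_ne_of_one_lt_card (by simpa using by omega) i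
      exfalso
      set v := φ.symm (some (j, 0)) with hv0
      have hv : φ v = some (j, 0) := φ.apply_symm_apply _
      have hvn : v ≠ none := by
        intro h
        rw [h, hφ] at hv
        exact hj (Prod.ext_iff.mp (Option.some.inj hv)).1.symm
      obtain ⟨y, hy⟩ := Option.ne_none_iff_exists'.mp hvn
      have hadj : (friendshipGraph n).Adj none v := by rw [hy]; exact adj_none_some y
      have := φ.map_rel_iff.mpr hadj
      rw [hφ, hv] at this
      exact hj ((adj_some_some i j a 0).mp this).1.symm
  have hsome : ∀ x : Fin n × Fin 2, ∃ y, φ (some x) = some y := by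
    intro x
    cases h : φ (some x) with
    | none => exact absurd (φ.injective (h.trans hnone.symm)) (by simp)
    | some y => exact ⟨y, rfl⟩
  have hfix : ∀ i : Fin n, φ (some (i,0)) = some (i,0) ∧ φ (some (i,1)) = some (i,1) := by
    intro i
    obtain ⟨⟨m, a⟩, hp⟩ := hsome (i, 0)
    obtain ⟨⟨m', b⟩, hq⟩ := hsome (i, 1)
    have hadj : (friendshipGraph n).Adj (some (m,a)) (some (m',b)) := by
      rw [← hp, ← hq]
      exact φ.map_rel_iff.mpr (by simp)
    obtain ⟨he, hab⟩ := (adj_some_some m m' a b).mp hadj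
    subst he
    have e0 := hcol (spoke i 0); rw [mapEdgeSet_spoke φ hnone hp] at e0
    have e1 := hcol (spoke i 1); rw [mapEdgeSet_spoke φ hnone hq] at e1
    have e2 := hcol (outer i); rw [mapEdgeSet_outer φ hab hp hq] at e2
    simp only [col_spoke, col_outer] at e0 e1 e2
    rcases fin2_cases a with rfl | rfl
    · have hb : b = 1 := by rcases fin2_cases b with rfl | rfl; exact absurd rfl hab; rfl
      subst hb
      simp at e0 e1
      have : ι m = ι i := by
        apply Prod.ext e0
        apply Prod.ext e1 e2
      obtain rfl := hinj this
      exact ⟨hp, hq⟩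
    · exfalso
      have hb : b = 0 := by rcases fin2_cases b with rfl | rfl; rfl; exact absurd rfl hab
      subst hb
      simp at e0 e1
      have h1 := hlt m
      rw [e1, e0] at h1
      exact absurd (hlt i) (asymm h1)
  intro v
  match v with
  | none => exact hnone
  | some (i, a) =>
    rcases fin2_cases a with rfl | rfl
    · exact (hfix i).1
    · exact (hfix i).2

lemma upper_bound (hn : 2 ≤ n) {k : ℕ} (hk : 2 * n ≤ k ^ 3 - k ^ 2) :
    ∃ c : (friendshipGraph n).edgeSet → Fin k, IsDistinguishingEdge (friendshipGraph n) c := by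
  have hk0 : 0 < k := by
    rcases Nat.eq_zero_or_pos k with rfl | h
    · simp at hk; omega
    · exact h
  have hcard : Fintype.card (Fin n) ≤
      Fintype.card {p : Fin k × Fin k × Fin k // p.1 < p.2.1} := by
    have := card_lt_triples k
    simp only [Fintype.card_fin]
    omega
  obtain ⟨emb⟩ := Function.Embedding.nonempty_of_card_le hcard
  refine ⟨col hk0 (fun i => (emb i).1), col_distinguishing hn hk0 _ (fun i => (emb i).2) ?_⟩
  intro i j h
  exact emb.injective (Subtype.ext h)

end FG

theorem friendship_distinguishingIndex (n : ℕ) (hn : 2 ≤ n) :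
    distinguishingIndex (friendshipGraph n) = sInf {k : ℕ | 2 * n ≤ k ^ 3 - k ^ 2} := by
  have hSne : {k : ℕ | 2 * n ≤ k ^ 3 - k ^ 2}.Nonempty := by
    refine ⟨2 * n, ?_⟩
    have h4 : 4 ≤ 2 * n := by omega
    have h1 : 2 * n + (2 * n) ^ 2 ≤ (2 * n) ^ 3 := by nlinarith
    exact Nat.le_sub_of_add_le h1
  have hk := Nat.sInf_mem hSne
  obtain ⟨c, hc⟩ := FG.upper_bound hn hk
  have hAne : {d : ℕ | ∃ c : (friendshipGraph n).edgeSet → Fin d,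
      IsDistinguishingEdge (friendshipGraph n) c}.Nonempty := ⟨_, c, hc⟩
  apply le_antisymm
  · exact Nat.sInf_le ⟨c, hc⟩
  · obtain ⟨c', hc'⟩ := Nat.sInf_mem hAne
    exact Nat.sInf_le (FG.lower_bound hn c' hc')
end

section
/- For every n ≥ 1, min{k ∈ ℕ : k³ − k² ≥ 2n} = ⌈(1/3)·a^{1/3} + 1/(3·a^{1/3}) + 1/3⌉, where a = 1 + 27n + 3√(81n² + 6n). -/
set_option maxHeartbeats 800000


open SimpleGraph

theorem min_cubic_eq_ceil (n : ℕ) (hn : 1 ≤ n) :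
    sInf {k : ℕ | 2 * n ≤ k ^ 3 - k ^ 2} =
      ⌈(1 / 3) * (1 + 27 * (n : ℝ) + 3 * Real.sqrt (81 * n ^ 2 + 6 * n)) ^ ((1 : ℝ) / 3)
        + 1 / (3 * (1 + 27 * (n : ℝ) + 3 * Real.sqrt (81 * n ^ 2 + 6 * n)) ^ ((1 : ℝ) / 3))
        + 1 / 3⌉₊ := by
  have hn1 : (1:ℝ) ≤ n := by exact_mod_cast hn
  set r : ℝ := Real.sqrt (81 * (n:ℝ) ^ 2 + 6 * n) with hrdef
  have hr0 : 0 ≤ r := Real.sqrt_nonneg _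
  have hr2 : r ^ 2 = 81 * (n:ℝ) ^ 2 + 6 * n := Real.sq_sqrt (by positivity)
  set a : ℝ := 1 + 27 * (n:ℝ) + 3 * r with hadef
  have ha1 : (1:ℝ) < a := by rw [hadef]; nlinarith
  have ha0 : (0:ℝ) < a := by linarith
  set u : ℝ := a ^ ((1:ℝ)/3) with hudef
  have hu0 : 0 < u := Real.rpow_pos_of_pos ha0 _
  have hu3 : u ^ 3 = a := by
    rw [hudef, ← Real.rpow_natCast (a ^ ((1:ℝ)/3)) 3, ← Real.rpow_mul ha0.le]
    norm_num
  have hu1 : 1 < u := by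
    nlinarith [hu3, ha1, sq_nonneg (u-1), sq_nonneg (u+1), mul_pos hu0 hu0]
  set f : ℝ := 1/3 * u + 1/(3*u) + 1/3 with hfdef
  have hf1 : 1 < f := by
    have he : (3*u) * f = u^2 + u + 1 := by
      rw [hfdef]; field_simp; ring
    have h : (3*u) * 1 < (3*u) * f := by
      rw [he]; nlinarith [sq_nonneg (u-1)]
    exact lt_of_mul_lt_mul_left h (by positivity)
  have key : f ^ 3 - f ^ 2 = 2 * n := by
    have h27 : (f ^ 3 - f ^ 2) * (27 * u ^ 3) = 2 * n * (27 * u ^ 3) := by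
      rw [hfdef]
      have : (1/3 * u + 1/(3*u) + 1/3) ^ 3 - (1/3 * u + 1/(3*u) + 1/3) ^ 2
          = ((u^2+u+1)^2 * (u-1)^2) / (27 * u^3) := by field_simp; ring
      rw [this, div_mul_cancel₀ _ (by positivity)]
      have expand : (u^2+u+1)^2 * (u-1)^2 = (u^3 - 1)^2 := by ring
      rw [expand, hu3, hadef]
      nlinarith [hr2]
    have h0 : (0:ℝ) < 27 * u ^ 3 := by positivity
    exact mul_right_cancel₀ (ne_of_gt h0) h27
  clear_value f
  clear hfdef
  clear_value u
  clear_value a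
  clear_value r
  set m : ℕ := ⌈f⌉₊ with hmdef
  clear_value m
  have hfm : f ≤ m := by rw [hmdef]; exact_mod_cast Nat.le_ceil f
  have hm1 : (1:ℝ) ≤ m := le_trans hf1.le hfm
  have hmem : m ∈ {k : ℕ | 2 * n ≤ k ^ 3 - k ^ 2} := by
    have hreal : (2*n : ℝ) ≤ (m:ℝ)^3 - (m:ℝ)^2 := by
      have hfac : (m:ℝ)^3 - (m:ℝ)^2 - (f^3 - f^2)
          = ((m:ℝ)-f)*((m:ℝ)^2+(m:ℝ)*f+f^2-(m:ℝ)-f) := by ring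
      have h2 : (0:ℝ) ≤ (m:ℝ)^2+(m:ℝ)*f+f^2-(m:ℝ)-f := by nlinarith
      have h3 : (0:ℝ) ≤ ((m:ℝ)-f)*((m:ℝ)^2+(m:ℝ)*f+f^2-(m:ℝ)-f) :=
        mul_nonneg (by linarith) h2
      linarith
    have : 2*n + m^2 ≤ m^3 := by
      have : (2*n + m^2 : ℝ) ≤ (m:ℝ)^3 := by push_cast; linarith
      exact_mod_cast this
    show 2 * n ≤ m ^ 3 - m ^ 2
    omega
  refine le_antisymm (Nat.sInf_le hmem) (le_csInf ⟨m, hmem⟩ ?_)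
  intro k hk
  simp only [Set.mem_setOf_eq] at hk
  have hk2 : 2 ≤ k := by
    by_contra h
    interval_cases k <;> omega
  rw [hmdef, Nat.ceil_le]
  by_contra h
  push_neg at h
  have hkr : (1:ℝ) ≤ k := by exact_mod_cast hk2.trans' (by norm_num)
  have hkreal : (2*n : ℝ) ≤ (k:ℝ)^3 - (k:ℝ)^2 := by
    have h1 : k^2 ≤ k^3 := Nat.pow_le_pow_right (by omega) (by omega)
    have : (2*n + k^2 : ℕ) ≤ (k^3 : ℕ) := by omega
    have := (Nat.cast_le (α := ℝ)).2 this
    push_cast at this; linarith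
  have hfac : f^3 - f^2 - ((k:ℝ)^3 - (k:ℝ)^2)
      = (f-(k:ℝ))*(f^2+f*(k:ℝ)+(k:ℝ)^2-f-(k:ℝ)) := by ring
  have h2 : (0:ℝ) < f^2+f*(k:ℝ)+(k:ℝ)^2-f-(k:ℝ) := by
    have ha' : (0:ℝ) < f*(f-1) := mul_pos (by linarith) (by linarith)
    have hb : (0:ℝ) ≤ (k:ℝ)*((k:ℝ)-1) := mul_nonneg (by linarith) (by linarith)
    have hc : (0:ℝ) < f*(k:ℝ) := mul_pos (by linarith) (by linarith)
    have hid : f^2+f*(k:ℝ)+(k:ℝ)^2-f-(k:ℝ) = f*(f-1)+(k:ℝ)*((k:ℝ)-1)+f*(k:ℝ) := by ring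
    linarith
  have h3 : (0:ℝ) < (f-(k:ℝ))*(f^2+f*(k:ℝ)+(k:ℝ)^2-f-(k:ℝ)) :=
    mul_pos (by linarith) h2
  linarith
end

section
/- For n ≥ 2, the distinguishing number of the book graph B_n = K_{1,n} □ P_2 equals ⌈√n⌉. -/
open SimpleGraph

/-! Every automorphism of `B_n` (`n ≥ 2`) maps the two hubs to hubs, since they are the only
vertices with `n + 1` neighbours, and hence permutes the `n` rungs `{(i, 0), (i, 1)}` of leaves.
If two rungs carry the same pair of labels, swapping them is a non-trivial automorphism preserving
the labeling, so a distinguishing labeling with `d` labels needs `n ≤ d ^ 2`. Conversely, for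
`d ≥ 2` and `n ≤ d ^ 2`, labeling the hubs `0` and `1` and the rungs by distinct pairs pins
every hub and then every rung. Finally `n ≤ d ^ 2 ↔ ⌈√n⌉ ≤ d`. -/

lemma SimpleGraph.Iso.ncard_neighborSet_apply {V W : Type*} {G : SimpleGraph V}
    {G' : SimpleGraph W} (φ : G ≃g G') (x : V) :
    (G'.neighborSet (φ x)).ncard = (G.neighborSet x).ncard := by
  simp only [← Nat.card_coe_set_eq]
  exact Nat.card_congr (φ.mapNeighborSet x).symm

lemma Fin.ne_iff_eq_rev_of_two {a b : Fin 2} : a ≠ b ↔ b = a.rev := by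
  fin_cases a <;> fin_cases b <;> decide

namespace bookGraph

variable {n : ℕ}

lemma adj_iff {x y : (Fin 1 ⊕ Fin n) × Fin 2} :
    (bookGraph n).Adj x y ↔
      (x.1.isLeft ≠ y.1.isLeft ∧ x.2 = y.2) ∨ (x.1 = y.1 ∧ x.2 ≠ y.2) := by
  rcases x with ⟨a | i, s⟩ <;> rcases y with ⟨b | j, t⟩ <;>
    simp [bookGraph, boxProd_adj, pathGraph_two_eq_top, Fin.fin_one_eq_zero, and_comm]

lemma neighborSet_inl (a : Fin 1) (t : Fin 2) :
    (bookGraph n).neighborSet (Sum.inl a, t) =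
      insert (Sum.inl a, t.rev) (Set.range fun j => (Sum.inr j, t)) := by
  ext ⟨b | j, s⟩ <;> simp [adj_iff, Fin.fin_one_eq_zero, Fin.ne_iff_eq_rev_of_two]

lemma neighborSet_inr (i : Fin n) (t : Fin 2) :
    (bookGraph n).neighborSet (Sum.inr i, t) = {(Sum.inl 0, t), (Sum.inr i, t.rev)} := by
  ext ⟨b | j, s⟩ <;> simp [adj_iff, Fin.fin_one_eq_zero, Fin.ne_iff_eq_rev_of_two, eq_comm]

lemma ncard_neighborSet (x : (Fin 1 ⊕ Fin n) × Fin 2) :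
    ((bookGraph n).neighborSet x).ncard = if x.1.isLeft then n + 1 else 2 := by
  rcases x with ⟨a | i, t⟩
  · rw [neighborSet_inl, Set.ncard_insert_of_notMem (by simp),
      Set.ncard_range_of_injective (fun i j h => by simpa using h)]
    simp
  · rw [neighborSet_inr, Set.ncard_pair (by simp)]
    simp

lemma isLeft_iso_apply (hn : n ≠ 1) (φ : bookGraph n ≃g bookGraph n)
    (x : (Fin 1 ⊕ Fin n) × Fin 2) : (φ x).1.isLeft = x.1.isLeft := by
  have h := φ.ncard_neighborSet_apply x
  rw [ncard_neighborSet, ncard_neighborSet] at h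
  revert h
  cases (φ x).1 <;> cases x.1 <;> simp <;> omega

lemma exists_iso_apply_inr_eq (hn : n ≠ 1) (φ : bookGraph n ≃g bookGraph n)
    (hφ : ∀ t, φ (Sum.inl 0, t) = (Sum.inl 0, t)) (i : Fin n) :
    ∃ j, ∀ t, φ (Sum.inr i, t) = (Sum.inr j, t) := by
  have hlayer : ∀ t, ∃ j, φ (Sum.inr i, t) = (Sum.inr j, t) := by
    intro t
    obtain ⟨⟨_ | j, s⟩, h⟩ : ∃ y, φ (Sum.inr i, t) = y := ⟨_, rfl⟩
    · simpa [h] using isLeft_iso_apply hn φ (Sum.inr i, t)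
    · have hadj : (bookGraph n).Adj (Sum.inl 0, t) (Sum.inr j, s) := by
        rw [← hφ t, ← h, φ.map_adj_iff]
        simp [adj_iff]
      have hts : t = s := by simpa [adj_iff] using hadj
      exact ⟨j, by rw [h, hts]⟩
  obtain ⟨j, hj⟩ := hlayer 0
  obtain ⟨k, hk⟩ := hlayer 1
  have hjk : j = k := by
    have hadj : (bookGraph n).Adj (Sum.inr j, 0) (Sum.inr k, 1) := by
      rw [← hj, ← hk, φ.map_adj_iff]
      simp [adj_iff]
    simpa [adj_iff] using hadj
  refine ⟨j, fun t => ?_⟩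
  fin_cases t
  · exact hj
  · rw [hjk]; exact hk

def leafPerm (σ : Equiv.Perm (Fin n)) : bookGraph n ≃g bookGraph n where
  toEquiv := (Equiv.sumCongr (Equiv.refl _) σ).prodCongr (Equiv.refl _)
  map_rel_iff' := by
    rintro ⟨a | i, s⟩ ⟨b | j, t⟩ <;> simp [adj_iff]

def labeling {d : ℕ} (hd : 2 ≤ d) (e : Fin n → Fin 2 → Fin d) :
    (Fin 1 ⊕ Fin n) × Fin 2 → Fin d
  | (Sum.inl _, t) => Fin.castLE hd t
  | (Sum.inr i, t) => e i t

lemma isDistinguishing_labeling {d : ℕ} (hn : n ≠ 1) (hd : 2 ≤ d)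
    {e : Fin n → Fin 2 → Fin d} (he : Function.Injective e) :
    IsDistinguishing (bookGraph n) (labeling hd e) := by
  intro φ hφ
  have hhub : ∀ t, φ (Sum.inl 0, t) = (Sum.inl 0, t) := by
    intro t
    obtain ⟨⟨a | j, s⟩, h⟩ : ∃ y, φ (Sum.inl 0, t) = y := ⟨_, rfl⟩
    · have hst : s = t :=
        Fin.castLE_injective hd (by simpa [h, labeling] using hφ (Sum.inl 0, t))
      rw [h, hst, Fin.fin_one_eq_zero a]
    · simpa [h] using isLeft_iso_apply hn φ (Sum.inl 0, t)
  rintro ⟨a | i, t⟩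
  · rw [Fin.fin_one_eq_zero a]
    exact hhub t
  · obtain ⟨j, hj⟩ := exists_iso_apply_inr_eq hn φ hhub i
    have hji : j = i := he <| funext fun s => by simpa [hj, labeling] using hφ (Sum.inr i, s)
    rw [hj, hji]

lemma injective_leafLabels_of_isDistinguishing {d : ℕ}
    {c : (Fin 1 ⊕ Fin n) × Fin 2 → Fin d} (hc : IsDistinguishing (bookGraph n) c) :
    Function.Injective fun i t => c (Sum.inr i, t) := by
  intro i j hij
  have hfix := hc (leafPerm (Equiv.swap i j)) ?_ (Sum.inr i, 0)
  · simpa [leafPerm] using hfix.symm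
  rintro ⟨a | k, t⟩
  · rfl
  · simp only [leafPerm, RelIso.coe_fn_mk, Equiv.prodCongr_apply, Prod.map,
      Equiv.sumCongr_apply, Sum.map_inr, Equiv.coe_refl, id, Equiv.swap_apply_def]
    split_ifs with hki hkj
    · rw [hki]; exact (congrFun hij t).symm
    · rw [hkj]; exact congrFun hij t
    · rfl

lemma le_sq_of_isDistinguishing {d : ℕ} {c : (Fin 1 ⊕ Fin n) × Fin 2 → Fin d}
    (hc : IsDistinguishing (bookGraph n) c) : n ≤ d ^ 2 := by
  simpa using Fintype.card_le_of_injective _ (injective_leafLabels_of_isDistinguishing hc)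

lemma exists_isDistinguishing_iff {d : ℕ} (hn : 2 ≤ n) :
    (∃ c : (Fin 1 ⊕ Fin n) × Fin 2 → Fin d, IsDistinguishing (bookGraph n) c) ↔ n ≤ d ^ 2 := by
  refine ⟨fun ⟨_, hc⟩ => le_sq_of_isDistinguishing hc, fun h => ?_⟩
  have hd : 2 ≤ d := by
    by_contra! hd
    have : d ^ 2 ≤ 1 ^ 2 := Nat.pow_le_pow_left (by omega) 2
    omega
  exact ⟨labeling hd (finFunctionFinEquiv.symm ∘ Fin.castLE h),
    isDistinguishing_labeling (by omega) hd
      (finFunctionFinEquiv.symm.injective.comp (Fin.castLE_injective h))⟩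

end bookGraph

lemma Nat.ceil_sqrt_le_iff {n d : ℕ} : ⌈√(n : ℝ)⌉₊ ≤ d ↔ n ≤ d ^ 2 := by
  rw [Nat.ceil_le, Real.sqrt_le_left (Nat.cast_nonneg _)]
  norm_cast

theorem book_distinguishingNumber (n : ℕ) (hn : 2 ≤ n) :
    distinguishingNumber (bookGraph n) = ⌈Real.sqrt n⌉₊ := by
  have h : {d | ∃ c : (Fin 1 ⊕ Fin n) × Fin 2 → Fin d, IsDistinguishing (bookGraph n) c} =
      Set.Ici ⌈√(n : ℝ)⌉₊ := by
    ext d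
    rw [Set.mem_ofPred_eq, bookGraph.exists_isDistinguishing_iff hn, Set.mem_Ici,
      Nat.ceil_sqrt_le_iff]
  rw [distinguishingNumber, h, csInf_Ici]
end

section
/- For n ≥ 4, the corona product P_n ∘ K_1 satisfies D(P_n ∘ K_1) = D'(P_n ∘ K_1) = 2, and its automorphism group has order 2. -/
open SimpleGraph

namespace CoronaPathK1

abbrev CG (n : ℕ) := coronaProduct (SimpleGraph.pathGraph n) (⊥ : SimpleGraph (Fin 1))

lemma adj_inl_inl {n : ℕ} {u v : Fin n} :
    (CG n).Adj (Sum.inl u) (Sum.inl v) ↔ (pathGraph n).Adj u v := by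
  simp only [CG, coronaProduct, fromRel_adj]
  constructor
  · rintro ⟨-, h⟩
    rcases h with (⟨a,b,ha,hb,h⟩|⟨_,_,_,h,_⟩|⟨_,_,_,h,_⟩) | (⟨a,b,ha,hb,h⟩|⟨_,_,_,h,_⟩|⟨_,_,_,h,_⟩) <;>
      simp_all
    exact h.symm
  · intro h
    exact ⟨by simp [h.ne], Or.inl (Or.inl ⟨u, v, rfl, rfl, h⟩)⟩

lemma adj_inl_inr {n : ℕ} {u v : Fin n} {w : Fin 1} :
    (CG n).Adj (Sum.inl u) (Sum.inr (v, w)) ↔ u = v := by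
  simp only [CG, coronaProduct, fromRel_adj]
  constructor
  · rintro ⟨-, h⟩
    rcases h with (h|h|⟨a,b,ha,hb⟩) | (h|h|⟨a,b,ha,hb⟩) <;> simp_all
  · rintro rfl
    exact ⟨by simp, Or.inl (Or.inr (Or.inr ⟨u, w, rfl, rfl⟩))⟩

lemma not_adj_inr_inr {n : ℕ} {p q : Fin n × Fin 1} :
    ¬ (CG n).Adj (Sum.inr p) (Sum.inr q) := by
  simp only [CG, coronaProduct, fromRel_adj]
  rintro ⟨-, h⟩
  rcases h with (h|⟨a,b,c,ha,hb,h⟩|h) | (h|⟨a,b,c,ha,hb,h⟩|h) <;> simp_all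

lemma path_rigid {n : ℕ} (hn : 2 ≤ n) (f : Fin n → Fin n) (hinj : Function.Injective f)
    (hadj : ∀ u v : Fin n, u.val + 1 = v.val →
      ((f u).val + 1 = (f v).val ∨ (f v).val + 1 = (f u).val)) :
    (∀ u, f u = u) ∨ (∀ u, f u = u.rev) := by
  have h0 : (0 : ℕ) < n := by omega
  have h1 : (1 : ℕ) < n := by omega
  have key : ∀ k, ∀ hk : k < n,
      (((f ⟨0, h0⟩).val + 1 = (f ⟨1, h1⟩).val → (f ⟨k, hk⟩).val = (f ⟨0, h0⟩).val + k) ∧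
      ((f ⟨1, h1⟩).val + 1 = (f ⟨0, h0⟩).val →
        k ≤ (f ⟨0, h0⟩).val ∧ (f ⟨k, hk⟩).val = (f ⟨0, h0⟩).val - k)) := by
    intro k
    induction k using Nat.strong_induction_on with
    | _ k IH =>
      intro hk
      match k with
      | 0 => simp
      | 1 => exact ⟨fun h => by omega, fun h => by omega⟩
      | (m+2) =>
        have hm1 : m + 1 < n := by omega
        have hm : m < n := by omega
        obtain ⟨IH1a, IH1b⟩ := IH (m+1) (by omega) hm1
        obtain ⟨IH0a, IH0b⟩ := IH m (by omega) hm
        have hstep := hadj ⟨m+1, hm1⟩ ⟨m+2, hk⟩ rfl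
        have hne : f ⟨m+2, hk⟩ ≠ f ⟨m, hm⟩ := by
          intro h; have := hinj h; simp [Fin.ext_iff] at this
        have hne' : (f ⟨m+2, hk⟩).val ≠ (f ⟨m, hm⟩).val := fun h => hne (Fin.ext h)
        constructor
        · intro h
          have e1 := IH1a h
          have e0 := IH0a h
          omega
        · intro h
          obtain ⟨hle1, e1⟩ := IH1b h
          obtain ⟨hle0, e0⟩ := IH0b h
          omega
  rcases hadj ⟨0, h0⟩ ⟨1, h1⟩ rfl with h | h
  · left
    intro u
    have h2 := (key u.val u.isLt).1 h
    have hend := ((key (n-1) (by omega)).1 h)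
    have hltN := (f ⟨n-1, by omega⟩).isLt
    have hu : (⟨u.val, u.isLt⟩ : Fin n) = u := rfl
    rw [hu] at h2
    exact Fin.ext (by omega)
  · right
    intro u
    obtain ⟨hle, heq⟩ := (key u.val u.isLt).2 h
    obtain ⟨hleN, heqN⟩ := (key (n-1) (by omega)).2 h
    have hu : (⟨u.val, u.isLt⟩ : Fin n) = u := rfl
    rw [hu] at heq
    have hlt := u.isLt
    exact Fin.ext (by simp [Fin.val_rev]; omega)

lemma nbr_inr {n : ℕ} {p : Fin n × Fin 1} {x : Fin n ⊕ Fin n × Fin 1}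
    (h : (CG n).Adj x (Sum.inr p)) : x = Sum.inl p.1 := by
  match x with
  | Sum.inl u => obtain ⟨p1, p2⟩ := p; rw [adj_inl_inr] at h; rw [h]
  | Sum.inr q => exact absurd h not_adj_inr_inr

lemma iso_inl {n : ℕ} (hn : 2 ≤ n) (φ : CG n ≃g CG n) (u : Fin n) :
    ∃ u', φ (Sum.inl u) = Sum.inl u' := by
  by_contra hc
  push_neg at hc
  obtain ⟨p, hp⟩ : ∃ p, φ (Sum.inl u) = Sum.inr p := by
    cases h : φ (Sum.inl u) with
    | inl u' => exact absurd h (hc u')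
    | inr p => exact ⟨p, rfl⟩
  have hnb1 : (CG n).Adj (Sum.inl u) (Sum.inr (u, 0)) := adj_inl_inr.mpr rfl
  obtain ⟨v, hv⟩ : ∃ v : Fin n, (CG n).Adj (Sum.inl u) (Sum.inl v) := by
    by_cases h : u.val + 1 < n
    · exact ⟨⟨u.val + 1, h⟩, adj_inl_inl.mpr (pathGraph_adj.mpr (Or.inl rfl))⟩
    · refine ⟨⟨u.val - 1, by omega⟩, adj_inl_inl.mpr (pathGraph_adj.mpr (Or.inr ?_))⟩
      have := u.isLt; simp; omega
  have h1 := φ.map_adj_iff.mpr hnb1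
  have h2 := φ.map_adj_iff.mpr hv
  rw [hp] at h1 h2
  have e1 := nbr_inr h1.symm
  have e2 := nbr_inr h2.symm
  rw [← e2] at e1
  have := φ.injective e1
  simp at this

lemma iso_inr {n : ℕ} (hn : 2 ≤ n) (φ : CG n ≃g CG n) (p : Fin n × Fin 1) :
    ∃ q, φ (Sum.inr p) = Sum.inr q := by
  cases h : φ (Sum.inr p) with
  | inr q => exact ⟨q, rfl⟩
  | inl u' =>
    obtain ⟨u'', hu⟩ := iso_inl hn φ.symm u'
    have : φ.symm (φ (Sum.inr p)) = Sum.inl u'' := by rw [h, hu]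
    simp at this

def revMap (n : ℕ) : Fin n ⊕ Fin n × Fin 1 ≃ Fin n ⊕ Fin n × Fin 1 :=
  Equiv.sumCongr (Fin.revPerm) (Equiv.prodCongr Fin.revPerm (Equiv.refl _))

lemma path_rev_adj {n : ℕ} {u v : Fin n} :
    (pathGraph n).Adj u.rev v.rev ↔ (pathGraph n).Adj u v := by
  rw [pathGraph_adj, pathGraph_adj, Fin.val_rev, Fin.val_rev]
  have := u.isLt; have := v.isLt
  omega

def revIso (n : ℕ) : CG n ≃g CG n where
  toEquiv := revMap n
  map_rel_iff' := by
    rintro (u | ⟨u, w⟩) (v | ⟨v, w'⟩)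
    · simpa [revMap, adj_inl_inl] using path_rev_adj
    · simp [revMap, adj_inl_inr, Fin.rev_inj]
    · rw [(CG n).adj_comm, (CG n).adj_comm (Sum.inr _)]
      simp [revMap, adj_inl_inr, Fin.rev_inj]
    · simp [revMap]
      constructor <;> intro h <;> exact absurd h not_adj_inr_inr

lemma classify {n : ℕ} (hn : 2 ≤ n) (φ : CG n ≃g CG n) :
    (∀ x, φ x = x) ∨ (∀ x, φ x = revMap n x) := by
  set σ : Fin n → Fin n := fun u => (φ (Sum.inl u)).elim id Prod.fst with hσdef
  have hσ : ∀ u, φ (Sum.inl u) = Sum.inl (σ u) := by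
    intro u
    obtain ⟨u', hu'⟩ := iso_inl hn φ u
    rw [hu', hσdef]; simp [hu']
  have hinj : Function.Injective σ := by
    intro a b h
    have : φ (Sum.inl a) = φ (Sum.inl b) := by rw [hσ, hσ, h]
    simpa using φ.injective this
  have hadj : ∀ u v : Fin n, u.val + 1 = v.val →
      ((σ u).val + 1 = (σ v).val ∨ (σ v).val + 1 = (σ u).val) := by
    intro u v h
    have : (CG n).Adj (Sum.inl u) (Sum.inl v) :=
      adj_inl_inl.mpr (pathGraph_adj.mpr (Or.inl h))
    have := φ.map_adj_iff.mpr this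
    rw [hσ, hσ, adj_inl_inl, pathGraph_adj] at this
    exact this
  have hleaf : ∀ p : Fin n × Fin 1, φ (Sum.inr p) = Sum.inr (σ p.1, p.2) := by
    intro p
    obtain ⟨q, hq⟩ := iso_inr hn φ p
    have : (CG n).Adj (Sum.inl p.1) (Sum.inr p) := by
      obtain ⟨p1, p2⟩ := p; exact adj_inl_inr.mpr rfl
    have h2 := φ.map_adj_iff.mpr this
    rw [hσ, hq] at h2
    have := nbr_inr h2
    simp at this
    rw [hq]
    obtain ⟨q1, q2⟩ := q
    simp at this ⊢
    exact ⟨this.symm, Subsingleton.elim _ _⟩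
  rcases path_rigid hn σ hinj hadj with h | h
  · left
    rintro (u | p)
    · rw [hσ, h]
    · rw [hleaf, h]
  · right
    rintro (u | p)
    · rw [hσ, h]; rfl
    · rw [hleaf, h]; rfl

lemma rev_ne_id {n : ℕ} (hn : 2 ≤ n) {z : Fin n} (hz : z.val = 0) :
    revMap n (Sum.inl z) ≠ Sum.inl z := by
  simp [revMap, Fin.ext_iff, Fin.val_rev]
  omega

def idIso (n : ℕ) : CG n ≃g CG n := RelIso.refl _

/-- Equivalence between automorphisms and Bool. -/
noncomputable def autEquivBool {n : ℕ} (hn : 2 ≤ n) : (CG n ≃g CG n) ≃ Bool where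
  toFun φ := decide (φ (Sum.inl (⟨0, by omega⟩ : Fin n)) = Sum.inl (⟨0, by omega⟩ : Fin n))
  invFun b := bif b then idIso n else revIso n
  left_inv φ := by
    beta_reduce
    rcases classify hn φ with h | h
    · rw [decide_eq_true (h _), cond_true]
      exact (RelIso.ext fun x => (h x).symm)
    · have hne : φ (Sum.inl (⟨0, by omega⟩ : Fin n)) ≠ Sum.inl (⟨0, by omega⟩ : Fin n) := by
        rw [h _]; exact rev_ne_id hn rfl
      rw [decide_eq_false hne, cond_false]
      exact (RelIso.ext fun x => (h x).symm)
  right_inv b := by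
    cases b
    · beta_reduce
      rw [cond_false]
      exact decide_eq_false (rev_ne_id hn rfl)
    · beta_reduce
      rw [cond_true]
      exact decide_eq_true rfl

end CoronaPathK1

set_option maxHeartbeats 2000000 in
open CoronaPathK1 in
theorem corona_path_K1 (n : ℕ) (hn : 4 ≤ n) :
    distinguishingNumber (coronaProduct (SimpleGraph.pathGraph n) (⊥ : SimpleGraph (Fin 1))) = 2 ∧
    distinguishingIndex (coronaProduct (SimpleGraph.pathGraph n) (⊥ : SimpleGraph (Fin 1))) = 2 ∧
    Nat.card (coronaProduct (SimpleGraph.pathGraph n) (⊥ : SimpleGraph (Fin 1)) ≃g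
      coronaProduct (SimpleGraph.pathGraph n) (⊥ : SimpleGraph (Fin 1))) = 2 := by
  have hn2 : 2 ≤ n := by omega
  have hrevne : revIso n (Sum.inl (⟨0, by omega⟩ : Fin n)) ≠ Sum.inl (⟨0, by omega⟩ : Fin n) :=
    rev_ne_id hn2 rfl
  have hgoodV : IsDistinguishing (CG n)
      (fun x => if x = Sum.inl (⟨0, by omega⟩ : Fin n) then (1 : Fin 2) else 0) := by
    intro φ hpres
    rcases classify hn2 φ with h | h
    · exact h
    · exfalso
      have := hpres (Sum.inl (⟨0, by omega⟩ : Fin n))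
      rw [h _] at this
      beta_reduce at this
      rw [if_neg (rev_ne_id hn2 rfl), if_pos rfl] at this
      exact absurd this (by decide)
  have hadj0 : (CG n).Adj (Sum.inl (⟨0, by omega⟩ : Fin n))
      (Sum.inr ((⟨0, by omega⟩ : Fin n), 0)) := adj_inl_inr.mpr rfl
  have he0mem : s(Sum.inl (⟨0, by omega⟩ : Fin n), Sum.inr ((⟨0, by omega⟩ : Fin n), 0)) ∈
      (CG n).edgeSet := hadj0
  have hgoodE : IsDistinguishingEdge (CG n)
      (fun e => if (e : Sym2 (Fin n ⊕ Fin n × Fin 1)) =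
        s(Sum.inl (⟨0, by omega⟩ : Fin n), Sum.inr ((⟨0, by omega⟩ : Fin n), 0))
        then (1 : Fin 2) else 0) := by
    intro φ hpres
    rcases classify hn2 φ with h | h
    · exact h
    · exfalso
      have hthis := hpres ⟨_, he0mem⟩
      have hval : ((φ.mapEdgeSet ⟨_, he0mem⟩ : (CG n).edgeSet) : Sym2 _) =
          s(φ (Sum.inl (⟨0, by omega⟩ : Fin n)), φ (Sum.inr ((⟨0, by omega⟩ : Fin n), 0))) := rfl
      beta_reduce at hthis
      rw [hval, h _, h _] at hthis
      have hne : s((revMap n) (Sum.inl (⟨0, by omega⟩ : Fin n)),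
          (revMap n) (Sum.inr ((⟨0, by omega⟩ : Fin n), 0))) ≠
          s(Sum.inl (⟨0, by omega⟩ : Fin n), Sum.inr ((⟨0, by omega⟩ : Fin n), 0)) := by
        intro hcontra
        rw [Sym2.eq_iff] at hcontra
        rcases hcontra with ⟨h1, h2⟩ | ⟨h1, h2⟩
        · exact rev_ne_id hn2 rfl h1
        · simp [revMap] at h1
      rw [if_neg hne, if_pos rfl] at hthis
      exact absurd hthis (by decide)
  refine ⟨?_, ?_, ?_⟩
  · apply le_antisymm
    · exact Nat.sInf_le ⟨_, hgoodV⟩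
    · refine le_csInf ⟨2, _, hgoodV⟩ ?_
      rintro d ⟨c, hc⟩
      by_contra hlt
      push_neg at hlt
      interval_cases d
      · exact (c (Sum.inl (⟨0, by omega⟩ : Fin n))).elim0
      · exact hrevne (hc (revIso n) (fun v => Subsingleton.elim _ _) _)
  · apply le_antisymm
    · exact Nat.sInf_le ⟨_, hgoodE⟩
    · refine le_csInf ⟨2, _, hgoodE⟩ ?_
      rintro d ⟨c, hc⟩
      by_contra hlt
      push_neg at hlt
      interval_cases d
      · exact (c ⟨_, he0mem⟩).elim0
      · exact hrevne (hc (revIso n) (fun e => Subsingleton.elim _ _) _)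
  · rw [Nat.card_congr (autEquivBool hn2)]
    simp
end

section
/- For any two connected graphs G and H with G ≠ K_1, every automorphism f of the corona product G ∘ H restricts to an automorphism of G, and f maps the i-th copy of H onto the j-th copy of H whenever f(v_i) = v_j. -/
open SimpleGraph

section CoronaAux
variable {V W : Type*} {G : SimpleGraph V} {H : SimpleGraph W}

lemma corona_inl_inl {u v : V} :
    (coronaProduct G H).Adj (Sum.inl u) (Sum.inl v) ↔ G.Adj u v := by
  simp only [coronaProduct, fromRel_adj]
  constructor
  · rintro ⟨h, (⟨a,b,ha,hb,hab⟩|⟨_,_,_,h1,_⟩|⟨_,_,_,h1⟩)|(⟨a,b,ha,hb,hab⟩|⟨_,_,_,h1,_⟩|⟨_,_,h1,h2⟩)⟩ <;>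
      simp_all <;> exact hab.symm
  · intro h
    exact ⟨by simp [h.ne], Or.inl (Or.inl ⟨u, v, rfl, rfl, h⟩)⟩

lemma corona_inl_inr {v a : V} {w : W} :
    (coronaProduct G H).Adj (Sum.inl v) (Sum.inr (a, w)) ↔ a = v := by
  simp only [coronaProduct, fromRel_adj]
  constructor
  · rintro ⟨h, h'⟩
    rcases h' with (⟨_,_,_,hb,_⟩|⟨_,_,_,h1,_⟩|⟨b,c,h1,h2⟩)|(⟨_,_,h1,_⟩|⟨_,_,_,_,h1,_⟩|⟨_,_,h1,_⟩) <;> simp_all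
  · rintro rfl
    exact ⟨by simp, Or.inl (Or.inr (Or.inr ⟨a, w, rfl, rfl⟩))⟩

lemma corona_inr_inr {v v' : V} {w w' : W} :
    (coronaProduct G H).Adj (Sum.inr (v, w)) (Sum.inr (v', w')) ↔ v = v' ∧ H.Adj w w' := by
  simp only [coronaProduct, fromRel_adj]
  constructor
  · rintro ⟨h, h'⟩
    rcases h' with (⟨_,_,h1,_⟩|⟨a,b,c,h1,h2,h3⟩|⟨_,_,h1,_⟩)|(⟨_,_,h1,_⟩|⟨a,b,c,h1,h2,h3⟩|⟨_,_,_,h1⟩) <;>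
      simp_all
    exact h3.symm
  · rintro ⟨rfl, h⟩
    exact ⟨by simp [h.ne], Or.inl (Or.inr (Or.inl ⟨v, w, w', rfl, rfl, h⟩))⟩

/-- `x` has a neighbor adjacent to all its other neighbors. -/
def HasDomNbr {A : Type*} (K : SimpleGraph A) (x : A) : Prop :=
  ∃ y, K.Adj x y ∧ ∀ z, K.Adj x z → z ≠ y → K.Adj y z

lemma hasDomNbr_map {A B : Type*} {K : SimpleGraph A} {L : SimpleGraph B}
    (f : K ≃g L) {x : A} (h : HasDomNbr K x) : HasDomNbr L (f x) := by
  obtain ⟨y, hy, hdom⟩ := h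
  refine ⟨f y, f.map_adj_iff.mpr hy, fun z hz hne => ?_⟩
  have : K.Adj x (f.symm z) := by
    have := f.symm.map_adj_iff.mpr hz; simpa using this
  have h2 := hdom (f.symm z) this (by
    intro he; apply hne; rw [← f.apply_symm_apply z, he])
  have := f.map_adj_iff.mpr h2
  simpa using this

lemma hasDomNbr_inr (v : V) (w : W) : HasDomNbr (coronaProduct G H) (Sum.inr (v, w)) := by
  refine ⟨Sum.inl v, (coronaProduct G H).adj_symm (corona_inl_inr.mpr rfl), fun z hz hne => ?_⟩
  match z with
  | Sum.inl u =>
    have := ((coronaProduct G H).adj_symm hz)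
    rw [corona_inl_inr] at this
    subst this; exact absurd rfl hne
  | Sum.inr (a, w') =>
    rw [corona_inr_inr] at hz
    obtain ⟨rfl, _⟩ := hz
    exact corona_inl_inr.mpr rfl

lemma not_hasDomNbr_inl [Fintype V] (hG : G.Connected) (hV : 2 ≤ Fintype.card V)
    [Nonempty W] (v : V) : ¬ HasDomNbr (coronaProduct G H) (Sum.inl v) := by
  rintro ⟨y, hy, hdom⟩
  obtain ⟨u, hu⟩ : ∃ u, G.Adj v u := by
    obtain ⟨u, hne⟩ := Fintype.exists_ne_of_one_lt_card hV v
    obtain ⟨p⟩ := hG v u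
    cases p with
    | nil => exact absurd rfl hne
    | cons h p => exact ⟨_, h⟩
  obtain ⟨w⟩ := ‹Nonempty W›
  match y with
  | Sum.inl b =>
    have hz : (coronaProduct G H).Adj (Sum.inl v) (Sum.inr (v, w)) := corona_inl_inr.mpr rfl
    have hne : (Sum.inr (v, w) : V ⊕ V × W) ≠ Sum.inl b := by simp
    have h3 := hdom _ hz hne
    have hvb : v = b := corona_inl_inr.mp h3
    exact (corona_inl_inl.mp hy).ne hvb
  | Sum.inr (a, w') =>
    have ha : a = v := corona_inl_inr.mp hy
    subst ha
    have hz : (coronaProduct G H).Adj (Sum.inl a) (Sum.inl u) := corona_inl_inl.mpr hu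
    have h3 := hdom _ hz (by simp)
    have := corona_inl_inr.mp h3.symm
    exact hu.ne this

end CoronaAux


theorem corona_aut_structure {V W : Type*} [Fintype V] [Fintype W]
    (G : SimpleGraph V) (H : SimpleGraph W)
    (hG : G.Connected) (hH : H.Connected) (hV : 2 ≤ Fintype.card V)
    (φ : coronaProduct G H ≃g coronaProduct G H) :
    (∃ ψ : G ≃g G, ∀ v : V, φ (Sum.inl v) = Sum.inl (ψ v)) ∧
    (∀ v v' : V, φ (Sum.inl v) = Sum.inl v' →
      ∀ w : W, ∃ w' : W, φ (Sum.inr (v, w)) = Sum.inr (v', w')) := by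
  have : Nonempty W := hH.nonempty
  -- any automorphism sends `inl` vertices to `inl` vertices
  have key : ∀ (θ : coronaProduct G H ≃g coronaProduct G H) (v : V),
      ∃ v', θ (Sum.inl v) = Sum.inl v' := by
    intro θ v
    match h : θ (Sum.inl v) with
    | Sum.inl v' => exact ⟨v', rfl⟩
    | Sum.inr (a, w) =>
      exfalso
      refine not_hasDomNbr_inl (G := G) (H := H) hG hV v ?_
      have := hasDomNbr_map θ.symm (hasDomNbr_inr (G := G) (H := H) a w)
      rw [← h] at this
      simpa using this
  choose f hf using key φ
  choose g hg using key φ.symm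
  have li : ∀ v, g (f v) = v := fun v => by
    have : φ.symm (φ (Sum.inl v)) = Sum.inl v := by simp
    rw [hf v, hg (f v)] at this
    exact Sum.inl.inj this
  have ri : ∀ v, f (g v) = v := fun v => by
    have : φ (φ.symm (Sum.inl v)) = Sum.inl v := by simp
    rw [hg v, hf (g v)] at this
    exact Sum.inl.inj this
  constructor
  · refine ⟨⟨⟨f, g, li, ri⟩, ?_⟩, hf⟩
    intro u v
    simp only [Equiv.coe_fn_mk]
    rw [← corona_inl_inl (G := G) (H := H) (u := f u) (v := f v),
      ← hf u, ← hf v, φ.map_adj_iff, corona_inl_inl]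
  · intro v v' hv w
    match h : φ (Sum.inr (v, w)) with
    | Sum.inl u =>
      exfalso
      have := φ.symm_apply_apply (Sum.inr (v, w))
      rw [h, hg u] at this
      exact Sum.inl_ne_inr this
    | Sum.inr (a, w') =>
      refine ⟨w', ?_⟩
      have hadj : (coronaProduct G H).Adj (Sum.inl v) (Sum.inr (v, w)) := corona_inl_inr.mpr rfl
      have := φ.map_adj_iff.mpr hadj
      rw [hv, h] at this
      have : a = v' := corona_inl_inr.mp this
      rw [this]
end

section
/- Let G and H be connected graphs with G ≠ K_1. If D(G) = 1 then D(G ∘ H) = D(H). -/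
open SimpleGraph

/-!
In `G ∘ H` a vertex `v` of `G` has degree `deg_G v + |H|`, while a vertex of a copy of `H` has
degree at most `|H|`. So if `G` has no isolated vertex, every automorphism of `G ∘ H` maps `G`
onto itself; if moreover it fixes `G` pointwise (as it must when `D(G) = 1`), it maps each copy
of `H` onto itself. Hence a distinguishing labeling of `H`, repeated on every copy, distinguishes
`G ∘ H`. Conversely, an automorphism of one copy of `H` extends by the identity to `G ∘ H`, so a
distinguishing labeling of `G ∘ H` restricts to one of `H`.
-/

section

variable {V : Type*} {G : SimpleGraph V} {d : ℕ}

lemma IsDistinguishing.distinguishingNumber_le {c : V → Fin d} (hc : IsDistinguishing G c) :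
    distinguishingNumber G ≤ d :=
  Nat.sInf_le ⟨c, hc⟩

lemma exists_isDistinguishing_distinguishingNumber [Finite V] (G : SimpleGraph V) :
    ∃ c : V → Fin (distinguishingNumber G), IsDistinguishing G c := by
  obtain ⟨n, ⟨e⟩⟩ := Finite.exists_equiv_fin V
  exact Nat.sInf_mem (s := {d | ∃ c : V → Fin d, IsDistinguishing G c})
    ⟨n, e, fun φ h v => e.injective (h v)⟩

lemma isDistinguishing_of_distinguishingNumber_le_one [Finite V]
    (hG : distinguishingNumber G ≤ 1) (c : V → Fin d) : IsDistinguishing G c := by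
  obtain ⟨c₁, hc₁⟩ := exists_isDistinguishing_distinguishingNumber G
  have := Fin.subsingleton_iff_le_one.2 hG
  exact fun φ _ => hc₁ φ fun _ => Subsingleton.elim _ _

end

lemma SimpleGraph.Iso.exists_restrict_of_mem_range_iff {U W : Type*} {H : SimpleGraph W}
    {K : SimpleGraph U} (f : H ↪g K) (φ : K ≃g K)
    (hφ : ∀ x, φ x ∈ Set.range f ↔ x ∈ Set.range f) :
    ∃ ψ : H ≃g H, ∀ w, φ (f w) = f (ψ w) := by
  let e := Equiv.ofInjective f f.injective
  let ψ : W ≃ W := (e.trans (φ.toEquiv.subtypeEquiv fun x => (hφ x).symm)).trans e.symm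
  have hψ : ∀ w, f (ψ w) = φ (f w) := fun w => Equiv.apply_ofInjective_symm f.injective _
  refine ⟨⟨ψ, fun {a b} => ?_⟩, fun w => (hψ w).symm⟩
  rw [← f.map_adj_iff, hψ, hψ, φ.map_adj_iff, f.map_adj_iff]

namespace coronaProduct

variable {V W : Type*} {G : SimpleGraph V} {H : SimpleGraph W}

@[simp] lemma adj_inl_inl {u v : V} :
    (coronaProduct G H).Adj (.inl u) (.inl v) ↔ G.Adj u v := by
  grind [coronaProduct, fromRel_adj, Adj.symm, Adj.ne]

@[simp] lemma adj_inl_inr {u v : V} {w : W} :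
    (coronaProduct G H).Adj (.inl u) (.inr (v, w)) ↔ u = v := by
  grind [coronaProduct, fromRel_adj]

@[simp] lemma adj_inr_inl {u v : V} {w : W} :
    (coronaProduct G H).Adj (.inr (v, w)) (.inl u) ↔ v = u := by
  rw [adj_comm, adj_inl_inr, eq_comm]

@[simp] lemma adj_inr_inr {v v' : V} {w w' : W} :
    (coronaProduct G H).Adj (.inr (v, w)) (.inr (v', w')) ↔ v = v' ∧ H.Adj w w' := by
  grind [coronaProduct, fromRel_adj, Adj.symm, Adj.ne]

lemma neighborFinset_inl [Fintype V] [Fintype W] [DecidableRel G.Adj] (v : V)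
    [Fintype ((coronaProduct G H).neighborSet (.inl v))] :
    (coronaProduct G H).neighborFinset (.inl v) =
      (G.neighborFinset v).disjSum ({v} ×ˢ .univ) := by
  ext (u | ⟨u, w⟩) <;> simp [eq_comm]

lemma neighborFinset_inr [Fintype W] [DecidableRel H.Adj] (v : V) (w : W)
    [Fintype ((coronaProduct G H).neighborSet (.inr (v, w)))] :
    (coronaProduct G H).neighborFinset (.inr (v, w)) =
      ({v} : Finset V).disjSum ({v} ×ˢ H.neighborFinset w) := by
  ext (u | ⟨u, w⟩) <;> simp [eq_comm, and_comm]

lemma degree_inl [Fintype V] [Fintype W] [DecidableRel G.Adj] (v : V)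
    [Fintype ((coronaProduct G H).neighborSet (.inl v))] :
    (coronaProduct G H).degree (.inl v) = G.degree v + Fintype.card W := by
  simp [← card_neighborFinset_eq_degree, neighborFinset_inl]

lemma degree_inr [Fintype W] [DecidableRel H.Adj] (v : V) (w : W)
    [Fintype ((coronaProduct G H).neighborSet (.inr (v, w)))] :
    (coronaProduct G H).degree (.inr (v, w)) = 1 + H.degree w := by
  simp [← card_neighborFinset_eq_degree, neighborFinset_inr]

lemma isLeft_iff_card_lt_degree [Fintype V] [Fintype W] [DecidableRel G.Adj] [DecidableRel H.Adj]
    (hG : ∀ v, ¬G.IsIsolated v) (x : V ⊕ V × W)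
    [Fintype ((coronaProduct G H).neighborSet x)] :
    x.isLeft ↔ Fintype.card W < (coronaProduct G H).degree x := by
  rcases x with v | ⟨v, w⟩
  · simpa [degree_inl] using (degree_pos _ v).2 (hG v)
  · have := H.degree_lt_card_verts w
    simp only [Sum.isLeft_inr, Bool.false_eq_true, degree_inr, false_iff, not_lt]
    omega

lemma isLeft_apply_iff [Fintype V] [Fintype W] (hG : ∀ v, ¬G.IsIsolated v)
    (φ : coronaProduct G H ≃g coronaProduct G H) (x : V ⊕ V × W) :
    (φ x).isLeft ↔ x.isLeft := by
  classical
  rw [isLeft_iff_card_lt_degree (H := H) hG, isLeft_iff_card_lt_degree (H := H) hG, φ.degree_eq]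

def inlEmbedding : G ↪g coronaProduct G H := ⟨.inl, adj_inl_inl⟩

def inrEmbedding (v : V) : H ↪g coronaProduct G H :=
  ⟨⟨fun w => .inr (v, w), Sum.inr_injective.comp (Prod.mk_right_injective v)⟩, by simp⟩

@[simp] lemma inlEmbedding_apply (v : V) : inlEmbedding (G := G) (H := H) v = .inl v := rfl

@[simp] lemma inrEmbedding_apply (v : V) (w : W) :
    inrEmbedding (G := G) (H := H) v w = .inr (v, w) := rfl

lemma mem_range_inlEmbedding_iff {x : V ⊕ V × W} :
    x ∈ Set.range (inlEmbedding (G := G) (H := H)) ↔ x.isLeft := by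
  cases x <;> simp

lemma mem_range_inrEmbedding_iff {v : V} {x : V ⊕ V × W} :
    x ∈ Set.range (inrEmbedding (G := G) (H := H) v) ↔
      ¬x.isLeft ∧ (coronaProduct G H).Adj (.inl v) x := by
  rcases x with u | ⟨u, w⟩ <;> simp [eq_comm]

section congrRight

variable {W' : Type*} {H' : SimpleGraph W'}

def congrRight (ψ : V → H ≃g H') :
    coronaProduct G H ≃g coronaProduct G H' where
  toEquiv := .sumCongr (.refl V) (.prodShear (.refl V) fun v => (ψ v).toEquiv)
  map_rel_iff' := by
    rintro (u | ⟨u, w⟩) (v | ⟨v, w'⟩)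
    all_goals simp only [Equiv.sumCongr_apply, Sum.map_inl, Sum.map_inr, Equiv.refl_apply,
      Equiv.prodShear_apply, adj_inl_inl, adj_inl_inr, adj_inr_inl, adj_inr_inr]
    exact and_congr_right fun (h : u = v) => h ▸ (ψ u).map_adj_iff

@[simp] lemma congrRight_apply_inl (ψ : V → H ≃g H') (v : V) :
    congrRight (G := G) ψ (.inl v) = .inl v := rfl

@[simp] lemma congrRight_apply_inr (ψ : V → H ≃g H') (v : V) (w : W) :
    congrRight (G := G) ψ (.inr (v, w)) = .inr (v, ψ v w) := rfl

end congrRight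

theorem isDistinguishing_comp_inr {d : ℕ} {c : V ⊕ V × W → Fin d}
    (hc : IsDistinguishing (coronaProduct G H) c) (v : V) :
    IsDistinguishing H fun w => c (.inr (v, w)) := by
  classical
  intro ψ hψ w
  suffices congrRight (G := G) (Pi.mulSingle v ψ) (.inr (v, w)) = .inr (v, w) by simpa using this
  refine hc _ ?_ _
  rintro (u | ⟨u, w'⟩)
  · rfl
  · by_cases h : u = v
    · subst h
      simpa using hψ w'
    · simp [h]

variable [Fintype V] [Fintype W] {d : ℕ} {c : V → Fin d} {c' : V × W → Fin d}
  {φ : coronaProduct G H ≃g coronaProduct G H}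

lemma apply_inl_of_isDistinguishing (hG : ∀ v, ¬G.IsIsolated v) (hc : IsDistinguishing G c)
    (hφ : ∀ x, Sum.elim c c' (φ x) = Sum.elim c c' x) (v : V) : φ (.inl v) = .inl v := by
  obtain ⟨ψ, hψ⟩ := φ.exists_restrict_of_mem_range_iff inlEmbedding fun x => by
    simp only [mem_range_inlEmbedding_iff, isLeft_apply_iff hG]
  simp only [inlEmbedding_apply] at hψ
  have hψc : ∀ u, c (ψ u) = c u := fun u => by simpa [hψ] using hφ (.inl u)
  simpa [hc ψ hψc] using hψ v

lemma exists_apply_inr_of_isDistinguishing (hG : ∀ v, ¬G.IsIsolated v)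
    (hc : IsDistinguishing G c) (hφ : ∀ x, Sum.elim c c' (φ x) = Sum.elim c c' x) (v : V) :
    ∃ ψ : H ≃g H, ∀ w, φ (.inr (v, w)) = .inr (v, ψ w) :=
  φ.exists_restrict_of_mem_range_iff (inrEmbedding v) fun x => by
    conv_lhs => rw [mem_range_inrEmbedding_iff, ← apply_inl_of_isDistinguishing hG hc hφ v,
      φ.map_adj_iff, isLeft_apply_iff hG]
    rw [mem_range_inrEmbedding_iff]

theorem isDistinguishing_sumElim (hG : ∀ v, ¬G.IsIsolated v) (hc : IsDistinguishing G c)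
    {c₀ : W → Fin d} (hc₀ : IsDistinguishing H c₀) :
    IsDistinguishing (coronaProduct G H) (Sum.elim c (c₀ ∘ Prod.snd)) := by
  rintro φ hφ (v | ⟨v, w⟩)
  · exact apply_inl_of_isDistinguishing hG hc hφ v
  · obtain ⟨ψ, hψ⟩ := exists_apply_inr_of_isDistinguishing hG hc hφ v
    have hψc : ∀ w, c₀ (ψ w) = c₀ w := fun w => by simpa [hψ] using hφ (.inr (v, w))
    rw [hψ, hc₀ ψ hψc]

end coronaProduct

theorem corona_distinguishingNumber_of_DG_one {V W : Type*} [Fintype V] [Fintype W]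
    (G : SimpleGraph V) (H : SimpleGraph W)
    (hG : G.Connected) (hH : H.Connected) (hV : 2 ≤ Fintype.card V)
    (hDG : distinguishingNumber G = 1) :
    distinguishingNumber (coronaProduct G H) = distinguishingNumber H := by
  have : Nontrivial V := Fintype.one_lt_card_iff_nontrivial.1 hV
  have hG' : ∀ v, ¬G.IsIsolated v := hG.preconnected.not_isIsolated
  obtain ⟨v₀⟩ : Nonempty V := inferInstance
  obtain ⟨w₀⟩ := hH.nonempty
  apply le_antisymm
  · obtain ⟨c, hc⟩ := exists_isDistinguishing_distinguishingNumber H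
    have hcG := isDistinguishing_of_distinguishingNumber_le_one hDG.le fun _ : V => c w₀
    exact (coronaProduct.isDistinguishing_sumElim hG' hcG hc).distinguishingNumber_le
  · obtain ⟨c, hc⟩ := exists_isDistinguishing_distinguishingNumber (coronaProduct G H)
    exact (coronaProduct.isDistinguishing_comp_inr hc v₀).distinguishingNumber_le
end

section
/- Let H be a connected graph of order at least 3. Then D'(K_1 ∘ H) ≤ D'(H) + 1. -/
open SimpleGraph

lemma exists_adj_of_conn {W : Type*} {H : SimpleGraph W} (hH : H.Connected)
    [Nontrivial W] (v : W) : ∃ u, H.Adj v u := by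
  obtain ⟨u, hu⟩ := exists_ne v
  obtain ⟨p⟩ := hH.preconnected v u
  cases p with
  | nil => exact absurd rfl hu
  | cons h q => exact ⟨_, h⟩

lemma fix_all_edges {W : Type*} [Fintype W] {H : SimpleGraph W} (hH : H.Connected)
    (hW : 3 ≤ Fintype.card W) (φ : H ≃g H)
    (hfix : ∀ a b, H.Adj a b → s(φ a, φ b) = s(a, b)) : ∀ v, φ v = v := by
  classical
  have : 1 < Fintype.card W := by omega
  haveI : Nontrivial W := Fintype.one_lt_card_iff_nontrivial.mp this
  intro v
  by_contra hv
  obtain ⟨u, hu⟩ := exists_adj_of_conn hH v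
  have h1 : φ v = u ∧ φ u = v := by
    have := hfix v u hu
    rw [Sym2.eq_iff] at this
    rcases this with ⟨h, h'⟩ | ⟨h, h'⟩
    · exact absurd h hv
    · exact ⟨h, h'⟩
  have hNv : ∀ y, H.Adj v y → y = u := by
    intro y hy
    have := hfix v y hy
    rw [h1.1, Sym2.eq_iff] at this
    rcases this with ⟨h, h'⟩ | ⟨h, h'⟩
    · exact absurd h hu.ne'
    · exact h.symm
  have hNu : ∀ z, H.Adj u z → z = v := by
    intro z hz
    have := hfix u z hz
    rw [h1.2, Sym2.eq_iff] at this
    rcases this with ⟨h, h'⟩ | ⟨h, h'⟩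
    · exact absurd h hu.ne
    · exact h.symm
  obtain ⟨x, hxv, hxu⟩ : ∃ x, x ≠ v ∧ x ≠ u := by
    by_contra hc
    push_neg at hc
    have hsub : (Finset.univ : Finset W) ⊆ {v, u} := by
      intro x _
      rcases eq_or_ne x v with rfl | h
      · simp
      · simp [hc x h]
    have := Finset.card_le_card hsub
    have h2 : ({v, u} : Finset W).card ≤ 2 := Finset.card_insert_le _ _ |>.trans (by simp)
    rw [Finset.card_univ] at this
    omega
  obtain ⟨p⟩ := hH.preconnected v x
  have key : ∀ (a b : W) (p : H.Walk a b), (a = v ∨ a = u) → (b = v ∨ b = u) := by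
    intro a b p
    induction p with
    | nil => exact id
    | cons h q ih =>
      rintro (rfl | rfl)
      · exact ih (Or.inr (hNv _ h))
      · exact ih (Or.inl (hNu _ h))
  rcases key v x p (Or.inl rfl) with h | h
  · exact hxv h
  · exact hxu h

lemma edge_witness {W : Type*} [Fintype W] {H : SimpleGraph W} (hH : H.Connected)
    (hW : 3 ≤ Fintype.card W) :
    {d : ℕ | ∃ c : H.edgeSet → Fin d, IsDistinguishingEdge H c}.Nonempty := by
  classical
  haveI : Finite H.edgeSet := (Set.toFinite H.edgeSet).to_subtype
  obtain ⟨n, ⟨e⟩⟩ := Finite.exists_equiv_fin H.edgeSet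
  refine ⟨n, (e : H.edgeSet → Fin n), ?_⟩
  intro φ hpres v
  apply fix_all_edges hH hW φ _ v
  intro a b hab
  have := hpres ⟨s(a, b), hab⟩
  have h2 : φ.mapEdgeSet ⟨s(a, b), hab⟩ = ⟨s(a, b), hab⟩ := e.injective this
  have := congrArg Subtype.val h2
  simpa using this

section Corona

variable {W : Type*} (H : SimpleGraph W)

local notation "G" => coronaProduct (⊥ : SimpleGraph (Fin 1)) H

abbrev ι (w : W) : Fin 1 ⊕ Fin 1 × W := Sum.inr (0, w)

lemma ι_inj : Function.Injective (ι (W := W)) := by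
  intro a b h
  simpa [ι] using h

lemma not_adj_inl_inl (x y : Fin 1) : ¬ (G).Adj (Sum.inl x) (Sum.inl y) := by
  simp [coronaProduct, fromRel_adj]

lemma adj_inl_ι (x : Fin 1) (w : W) : (G).Adj (Sum.inl x) (ι w) := by
  have : x = 0 := Subsingleton.elim _ _
  subst this
  simp [coronaProduct, fromRel_adj, ι]

lemma adj_ι_iff (w w' : W) : (G).Adj (ι w) (ι w') ↔ H.Adj w w' := by
  constructor
  · rintro h
    rw [coronaProduct, fromRel_adj] at h
    obtain ⟨hne, h | h⟩ := h <;>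
      rcases h with (⟨u, v, h1, h2, h3⟩ | ⟨v, a, b, h1, h2, h3⟩ | ⟨v, a, h1, h2⟩) <;>
      simp_all [ι] <;>
      first
        | exact h3
        | exact h3.symm
  · intro h
    rw [coronaProduct, fromRel_adj]
    exact ⟨by simp [ι, h.ne], Or.inl (Or.inr (Or.inl ⟨0, w, w', rfl, rfl, h⟩))⟩

lemma edge_cases (e : Sym2 (Fin 1 ⊕ Fin 1 × W)) (he : e ∈ (G).edgeSet) :
    (∃ f : H.edgeSet, Sym2.map (ι) f.val = e) ∨ ∃ w : W, e = s(Sum.inl 0, ι w) := by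
  induction e with
  | _ a b =>
    rw [mem_edgeSet] at he
    rcases a with x | ⟨x, w⟩ <;> rcases b with y | ⟨y, w'⟩
    · exact absurd he (not_adj_inl_inl H x y)
    · right
      refine ⟨w', ?_⟩
      have : x = 0 := Subsingleton.elim _ _
      have : y = 0 := Subsingleton.elim _ _
      subst_vars
      rfl
    · right
      refine ⟨w, ?_⟩
      have : x = 0 := Subsingleton.elim _ _
      have : y = 0 := Subsingleton.elim _ _
      subst_vars
      exact Sym2.eq_swap
    · left
      have : x = 0 := Subsingleton.elim _ _
      have : y = 0 := Subsingleton.elim _ _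
      subst_vars
      have hadj : H.Adj w w' := (adj_ι_iff H w w').mp he
      exact ⟨⟨s(w, w'), hadj⟩, rfl⟩

end Corona

theorem corona_K1_distinguishingIndex {W : Type*} [Fintype W]
    (H : SimpleGraph W) (hH : H.Connected) (hW : 3 ≤ Fintype.card W) :
    distinguishingIndex (coronaProduct (⊥ : SimpleGraph (Fin 1)) H) ≤
      distinguishingIndex H + 1 := by
  classical
  set d := distinguishingIndex H with hd
  obtain ⟨c, hc⟩ : ∃ c : H.edgeSet → Fin d, IsDistinguishingEdge H c :=
    Nat.sInf_mem (edge_witness hH hW)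
  set G' := coronaProduct (⊥ : SimpleGraph (Fin 1)) H with hG'
  -- map H-edges into G'
  have hmemι : ∀ f : H.edgeSet, Sym2.map ι f.val ∈ G'.edgeSet := by
    rintro ⟨e, he⟩
    induction e with
    | _ a b =>
      show Sym2.map ι s(a, b) ∈ G'.edgeSet
      rw [Sym2.map_pair_eq, mem_edgeSet]
      exact (adj_ι_iff H a b).mpr he
  have hιe_inj : Function.Injective (fun f : H.edgeSet => Sym2.map ι f.val) := by
    intro f g h
    exact Subtype.ext (Sym2.map.injective (ι_inj) h)
  -- the labeling
  set c' : G'.edgeSet → Fin (d + 1) := fun e =>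
    if h : ∃ f : H.edgeSet, Sym2.map ι f.val = e.val then (c h.choose).castSucc
    else Fin.last d with hc'
  have hc'_He : ∀ (e : G'.edgeSet) (f : H.edgeSet), Sym2.map ι f.val = e.val →
      c' e = (c f).castSucc := by
    intro e f hf
    have hex : ∃ f : H.edgeSet, Sym2.map ι f.val = e.val := ⟨f, hf⟩
    rw [hc']
    simp only [dif_pos hex]
    congr 1
    apply congrArg c
    exact hιe_inj (hex.choose_spec.trans hf.symm)
  have hc'_spoke : ∀ (e : G'.edgeSet) (w : W), e.val = s(Sum.inl 0, ι w) →
      c' e = Fin.last d := by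
    intro e w hw
    rw [hc']
    have : ¬ ∃ f : H.edgeSet, Sym2.map ι f.val = e.val := by
      rintro ⟨f, hf⟩
      have : (Sum.inl 0 : Fin 1 ⊕ Fin 1 × W) ∈ Sym2.map ι f.val := by
        rw [hf, hw]; simp
      rw [Sym2.mem_map] at this
      obtain ⟨a, -, ha⟩ := this
      simp [ι] at ha
    simp only [dif_neg this]
  have hspoke_of_last : ∀ e : G'.edgeSet, c' e = Fin.last d →
      ∃ w : W, e.val = s(Sum.inl 0, ι w) := by
    intro e he
    rcases edge_cases H e.val e.prop with ⟨f, hf⟩ | ⟨w, hw⟩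
    · rw [hc'_He e f hf] at he
      exact absurd he (Fin.castSucc_lt_last _).ne
    · exact ⟨w, hw⟩
  refine Nat.sInf_le ⟨c', ?_⟩
  intro φ hpres
  have hmapval : ∀ e : G'.edgeSet, (φ.mapEdgeSet e).val = Sym2.map φ e.val := fun _ => rfl
  -- Step A: φ fixes the center
  have hcenter : φ (Sum.inl 0) = Sum.inl 0 := by
    by_contra hcen
    obtain ⟨w₀, hw₀⟩ : ∃ w₀, φ (Sum.inl 0) = ι w₀ := by
      rcases h : φ (Sum.inl 0) with x | ⟨x, w⟩
      · rw [Subsingleton.elim x 0] at h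
        exact absurd h hcen
      · exact ⟨w, by rw [Subsingleton.elim x 0]⟩
    have key : ∀ w : W, φ (ι w) = Sum.inl 0 := by
      intro w
      have hadj : G'.Adj (Sum.inl 0) (ι w) := adj_inl_ι H 0 w
      set e : G'.edgeSet := ⟨s(Sum.inl 0, ι w), hadj⟩ with he
      have h1 : c' e = Fin.last d := hc'_spoke e w rfl
      have h2 : c' (φ.mapEdgeSet e) = Fin.last d := by rw [hpres e, h1]
      obtain ⟨w', hw'⟩ := hspoke_of_last _ h2
      rw [hmapval] at hw'
      have : s(φ (Sum.inl 0), φ (ι w)) = s(Sum.inl 0, ι w') := by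
        rw [← hw']; rfl
      rw [hw₀, Sym2.eq_iff] at this
      rcases this with ⟨h1', h2'⟩ | ⟨h1', h2'⟩
      · exact absurd h1' (by simp [ι])
      · exact h2'
    have h3 : 1 < Fintype.card W := by omega
    obtain ⟨w1, w2, hww⟩ := Fintype.exists_pair_of_one_lt_card h3
    exact hww (ι_inj (φ.injective ((key w1).trans (key w2).symm)))
  -- Step B: φ restricts to a color-preserving automorphism of H
  have hψ : ∀ w : W, ∃ w', φ (ι w) = ι w' := by
    intro w
    rcases h : φ (ι w) with x | ⟨x, w'⟩
    · exfalso
      rw [Subsingleton.elim x 0, ← hcenter] at h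
      have := φ.injective h
      simp [ι] at this
    · exact ⟨w', by rw [Subsingleton.elim x 0]⟩
  choose ψ hψs using hψ
  have hψsurj : Function.Surjective ψ := by
    intro w'
    rcases h : φ.symm (ι w') with x | ⟨x, w⟩
    · exfalso
      rw [Subsingleton.elim x 0] at h
      have h2 : ι w' = φ (Sum.inl 0) := by
        rw [← h]; exact (φ.apply_symm_apply _).symm
      rw [hcenter] at h2
      simp [ι] at h2
    · rw [Subsingleton.elim x 0] at h
      refine ⟨w, ?_⟩
      have h' : φ.symm (ι w') = ι w := h
      have h2 : φ (ι w) = ι w' := by rw [← h']; exact φ.apply_symm_apply _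
      rw [hψs w] at h2
      exact ι_inj h2
  have hψinj : Function.Injective ψ := by
    intro a b h
    have : φ (ι a) = φ (ι b) := by rw [hψs, hψs, h]
    exact ι_inj (φ.injective this)
  have hψadj : ∀ a b : W, H.Adj (ψ a) (ψ b) ↔ H.Adj a b := by
    intro a b
    rw [← adj_ι_iff H (ψ a) (ψ b), ← hψs, ← hψs, φ.map_adj_iff, adj_ι_iff]
  set Ψ : H ≃g H := ⟨Equiv.ofBijective ψ ⟨hψinj, hψsurj⟩, by
    intro a b
    exact hψadj a b⟩ with hΨ
  have hΨid : ∀ w, Ψ w = w := by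
    apply hc
    intro f
    -- compare labels
    set e : G'.edgeSet := ⟨Sym2.map ι f.val, hmemι f⟩ with he
    have h1 : c' e = (c f).castSucc := hc'_He e f rfl
    have h2 : (φ.mapEdgeSet e).val = Sym2.map ι (Ψ.mapEdgeSet f).val := by
      rw [hmapval]
      show Sym2.map φ (Sym2.map ι f.val) = Sym2.map ι (Sym2.map Ψ f.val)
      rw [Sym2.map_map, Sym2.map_map]
      exact Sym2.map_congr (fun x _ => hψs x)
    have h3 : c' (φ.mapEdgeSet e) = (c (Ψ.mapEdgeSet f)).castSucc :=
      hc'_He _ _ h2.symm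
    have := hpres e
    rw [h1, h3] at this
    exact Fin.castSucc_injective _ this
  intro v
  rcases v with x | ⟨x, w⟩
  · rw [Subsingleton.elim x 0]; exact hcenter
  · rw [Subsingleton.elim x 0]
    show φ (ι w) = ι w
    rw [hψs w]
    exact congrArg ι (hΨid w)
end
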